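/- arXiv:math/0208042 — 12 statements merged into one kernel-verified Lean document; each statement's English description precedes it below -/
import Mathlib

section
/- Let Δ : Ω^{𝛆}(𝐫) → ℝ≥0 be defined on the d-dimensional lattice Ω^{𝛆}(𝐫) = ∏_{i=1}^d ([0,r_i] ∩ ε_iℤ) and satisfy: for every lattice point x ≠ 0 there exists an index 1 ≤ i ≤ d with Δ(x) ≤ (1 + ε_i 𝒦)·Δ(x − ε_i e_i) + ε_i κ, with constants 𝒦 > 0, κ ≥ 0. Then Δ(x) ≤ max(Δ(0), κ/𝒦)·exp(2𝒦 ∑_{j=1}^d x_j) for all x in the lattice. -/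
/-- Discrete Gronwall lemma on the d-dimensional lattice
`Ω^𝛆(𝐫) = ∏ᵢ ([0,rᵢ] ∩ εᵢℤ)`: lattice points are `(x i · ε i)ᵢ` with `x i · ε i ≤ r i`. -/
theorem stmt1 (d : ℕ) (ε r : Fin d → ℝ) (hε : ∀ i, 0 < ε i) (hr : ∀ i, 0 < r i)
    (𝒦 κ : ℝ) (h𝒦 : 0 < 𝒦) (hκ : 0 ≤ κ)
    (Δ : (Fin d → ℕ) → ℝ) (hΔ : ∀ x, 0 ≤ Δ x)
    (hstep : ∀ x : Fin d → ℕ, (∀ i, (x i : ℝ) * ε i ≤ r i) → x ≠ 0 →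
      ∃ i, 1 ≤ x i ∧
        Δ x ≤ (1 + ε i * 𝒦) * Δ (Function.update x i (x i - 1)) + ε i * κ) :
    ∀ x : Fin d → ℕ, (∀ i, (x i : ℝ) * ε i ≤ r i) →
      Δ x ≤ max (Δ 0) (κ / 𝒦) * Real.exp (2 * 𝒦 * ∑ j, (x j : ℝ) * ε j) := by
  set M := max (Δ 0) (κ / 𝒦) with hM
  have hM0 : 0 ≤ M := le_trans (hΔ 0) (le_max_left _ _)
  have hκM : κ ≤ 𝒦 * M := by
    have : κ / 𝒦 ≤ M := le_max_right _ _
    calc κ = 𝒦 * (κ / 𝒦) := by field_simp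
    _ ≤ 𝒦 * M := by exact mul_le_mul_of_nonneg_left this h𝒦.le
  suffices H : ∀ n (x : Fin d → ℕ), ∑ i, x i = n → (∀ i, (x i : ℝ) * ε i ≤ r i) →
      Δ x ≤ M * Real.exp (2 * 𝒦 * ∑ j, (x j : ℝ) * ε j) by
    intro x hx; exact H (∑ i, x i) x rfl hx
  intro n
  induction n using Nat.strong_induction_on with
  | _ n ih =>
    intro x hsum hx
    by_cases hx0 : x = 0
    · subst hx0
      have : ∑ j, ((0 : Fin d → ℕ) j : ℝ) * ε j = 0 := by simp
      rw [this, mul_zero, Real.exp_zero, mul_one]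
      exact le_max_left _ _
    · obtain ⟨i, hi1, hΔle⟩ := hstep x hx hx0
      set y := Function.update x i (x i - 1) with hy
      have hsumy : ∑ j, y j = n - 1 := by
        rw [hy, Finset.sum_update_of_mem (Finset.mem_univ i)]
        have hset : Finset.univ \ {i} = Finset.univ.erase i := by
          ext j; simp [Finset.mem_erase, eq_comm]
        have h2 : x i + ∑ j ∈ Finset.univ.erase i, x j = n := by
          rw [Finset.add_sum_erase _ x (Finset.mem_univ i)]; exact hsum
        rw [hset]; omega
      have hn1 : n - 1 < n := by
        have : 1 ≤ n := by
          rw [← hsum]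
          calc 1 ≤ x i := hi1
          _ ≤ ∑ j, x j := Finset.single_le_sum (fun _ _ => Nat.zero_le _) (Finset.mem_univ i)
        omega
      have hyle : ∀ j, y j ≤ x j := by
        intro j
        rcases eq_or_ne j i with rfl | hj
        · simp [hy]
        · simp [hy, Function.update_of_ne hj]
      have hybnd : ∀ j, (y j : ℝ) * ε j ≤ r j := fun j =>
        le_trans (mul_le_mul_of_nonneg_right (Nat.cast_le.2 (hyle j)) (hε j).le) (hx j)
      have ihy := ih (n - 1) hn1 y hsumy hybnd
      -- real sums
      have hcast : ((x i - 1 : ℕ) : ℝ) = (x i : ℝ) - 1 := by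
        have := Nat.cast_sub hi1 (R := ℝ); simpa using this
      have hyi : (y i : ℝ) = (x i : ℝ) - 1 := by
        simp only [hy, Function.update_self]; exact hcast
      have hdiff : ∑ j, ((x j : ℝ) * ε j - (y j : ℝ) * ε j) = ε i := by
        rw [Finset.sum_eq_single i]
        · rw [hyi]; ring
        · intro j _ hj
          have : y j = x j := Function.update_of_ne hj _ _
          rw [this]; ring
        · simp
      have hS : ∑ j, (y j : ℝ) * ε j = (∑ j, (x j : ℝ) * ε j) - ε i := by
        rw [Finset.sum_sub_distrib] at hdiff; linarith
      set S' : ℝ := ∑ j, (y j : ℝ) * ε j with hS'def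
      have hS'0 : 0 ≤ S' := Finset.sum_nonneg fun j _ =>
        mul_nonneg (Nat.cast_nonneg _) (hε j).le
      have hE1 : (1 : ℝ) ≤ Real.exp (2 * 𝒦 * S') :=
        Real.one_le_exp (by positivity)
      have hSx : ∑ j, (x j : ℝ) * ε j = S' + ε i := by linarith [hS]
      rw [hSx]
      have hεi := hε i
      have hexp : 1 + 2 * (𝒦 * ε i) ≤ Real.exp (2 * 𝒦 * ε i) := by
        have := Real.add_one_le_exp (2 * 𝒦 * ε i)
        linarith
      have hexpand : Real.exp (2 * 𝒦 * (S' + ε i))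
          = Real.exp (2 * 𝒦 * S') * Real.exp (2 * 𝒦 * ε i) := by
        rw [← Real.exp_add]; ring_nf
      calc Δ x ≤ (1 + ε i * 𝒦) * Δ y + ε i * κ := hΔle
        _ ≤ (1 + ε i * 𝒦) * (M * Real.exp (2 * 𝒦 * S')) + ε i * κ := by
            have h1 : (0:ℝ) ≤ 1 + ε i * 𝒦 := by positivity
            nlinarith [ihy]
        _ ≤ M * Real.exp (2 * 𝒦 * (S' + ε i)) := by
            rw [hexpand]
            have hE0 : (0:ℝ) < Real.exp (2 * 𝒦 * S') := Real.exp_pos _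
            have h3 : ε i * κ ≤ ε i * 𝒦 * M * Real.exp (2 * 𝒦 * S') := by
              calc ε i * κ ≤ ε i * (𝒦 * M) := mul_le_mul_of_nonneg_left hκM hεi.le
                _ ≤ ε i * (𝒦 * M) * Real.exp (2 * 𝒦 * S') :=
                    le_mul_of_one_le_right (by positivity) hE1
                _ = ε i * 𝒦 * M * Real.exp (2 * 𝒦 * S') := by ring
            have h4 := mul_le_mul_of_nonneg_left hexp (mul_nonneg hM0 hE0.le)
            nlinarith [h3, h4]
end

section
/- Let Δ : [0,r_1]×…×[0,r_d] → ℝ be continuous and satisfy Δ(x_1,…,x_d) ≤ L·∑_{j=1}^d ∫_0^{x_j} Δ(x_1,…,x_{j−1},ξ,x_{j+1},…,x_d) dξ + Q for all points of the box, where L, Q ≥ 0 are constants. Then Δ(x_1,…,x_d) ≤ 2Q·exp(2dL·∑_{i=1}^d x_i) on the whole box. -/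
open MeasureTheory

open Set Real Filter

/-- Continuous multidimensional Gronwall lemma on the box `[0,r₁] × … × [0,r_d]`. -/
theorem stmt2 (d : ℕ) (hd : 1 ≤ d) (r : Fin d → ℝ) (hr : ∀ i, 0 < r i)
    (L Q : ℝ) (hL : 0 ≤ L) (hQ : 0 ≤ Q)
    (Δ : (Fin d → ℝ) → ℝ)
    (hcont : ContinuousOn Δ (Set.univ.pi fun i => Set.Icc 0 (r i)))
    (hineq : ∀ x ∈ Set.univ.pi fun i => Set.Icc 0 (r i),
      Δ x ≤ L * (∑ j, ∫ ξ in (0:ℝ)..(x j), Δ (Function.update x j ξ)) + Q) :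
    ∀ x ∈ Set.univ.pi fun i => Set.Icc 0 (r i),
      Δ x ≤ 2 * Q * Real.exp (2 * d * L * ∑ i, x i) := by
  intro x₀ hx₀
  set B : Set (Fin d → ℝ) := Set.univ.pi fun i => Set.Icc 0 (r i) with hBdef
  -- a global bound for Δ on the compact box
  obtain ⟨M, hM0, hM⟩ : ∃ M, 0 ≤ M ∧ ∀ y ∈ B, Δ y ≤ M := by
    have hBc : IsCompact B := isCompact_univ_pi fun i => isCompact_Icc
    obtain ⟨M0, hM0⟩ := (hBc.bddAbove_image hcont)
    exact ⟨max M0 0, le_max_right _ _, fun y hy =>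
      le_trans (hM0 ⟨y, hy, rfl⟩) (le_max_left _ _)⟩
  -- the sup function
  set g : ℝ → ℝ := fun t => sSup (insert 0 (Δ '' {y | y ∈ B ∧ ∑ i, y i ≤ t})) with hgdef
  have hbdd : ∀ t, BddAbove (insert 0 (Δ '' {y | y ∈ B ∧ ∑ i, y i ≤ t})) := by
    intro t
    refine ⟨M, ?_⟩
    rintro v (rfl | ⟨z, hz, rfl⟩)
    · exact hM0
    · exact hM z hz.1
  have hne : ∀ t : ℝ, (insert (0:ℝ) (Δ '' {y | y ∈ B ∧ ∑ i, y i ≤ t})).Nonempty :=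
    fun t => insert_nonempty _ _
  have hg0 : ∀ t, 0 ≤ g t := fun t => le_csSup (hbdd t) (mem_insert 0 _)
  have hgM : ∀ t, g t ≤ M := by
    intro t
    refine csSup_le (hne t) ?_
    rintro v (rfl | ⟨z, hz, rfl⟩)
    · exact hM0
    · exact hM z hz.1
  have hΔg : ∀ y ∈ B, ∀ t, ∑ i, y i ≤ t → Δ y ≤ g t := fun y hy t hyt =>
    le_csSup (hbdd t) (mem_insert_of_mem _ ⟨y, ⟨hy, hyt⟩, rfl⟩)
  have hgmono : Monotone g := by
    intro s t hst
    refine csSup_le_csSup (hbdd t) (hne s) ?_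
    exact insert_subset_insert (image_mono (fun y hy => ⟨hy.1, hy.2.trans hst⟩))
  have hgint : ∀ a b : ℝ, IntervalIntegrable g volume a b := fun a b =>
    hgmono.intervalIntegrable
  -- subinterval integral bound
  have hsub : ∀ a b t : ℝ, 0 ≤ a → a ≤ b → b ≤ t →
      (∫ u in a..b, g u) ≤ ∫ u in (0:ℝ)..t, g u := by
    intro a b t ha hab hbt
    have h1 : (∫ u in (0:ℝ)..a, g u) + (∫ u in a..b, g u) = ∫ u in (0:ℝ)..b, g u :=
      intervalIntegral.integral_add_adjacent_intervals (hgint 0 a) (hgint a b)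
    have h2 : (∫ u in (0:ℝ)..b, g u) + (∫ u in b..t, g u) = ∫ u in (0:ℝ)..t, g u :=
      intervalIntegral.integral_add_adjacent_intervals (hgint 0 b) (hgint b t)
    have h3 : 0 ≤ ∫ u in (0:ℝ)..a, g u :=
      intervalIntegral.integral_nonneg ha (fun u _ => hg0 u)
    have h4 : 0 ≤ ∫ u in b..t, g u :=
      intervalIntegral.integral_nonneg hbt (fun u _ => hg0 u)
    linarith
  -- core one-dimensional inequality
  have hcore : ∀ t : ℝ, 0 ≤ t → g t ≤ (d : ℝ) * L * (∫ s in (0:ℝ)..t, g s) + Q := by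
    intro t ht
    have hintnn : 0 ≤ ∫ s in (0:ℝ)..t, g s :=
      intervalIntegral.integral_nonneg ht (fun u _ => hg0 u)
    refine csSup_le (hne t) ?_
    rintro v (rfl | ⟨y, ⟨hyB, hyt⟩, rfl⟩)
    · positivity
    · have key : ∀ j : Fin d, (∫ ξ in (0:ℝ)..(y j), Δ (Function.update y j ξ))
          ≤ ∫ s in (0:ℝ)..t, g s := by
        intro j
        have hyj := hyB j (mem_univ j)
        have hyj0 : 0 ≤ y j := hyj.1
        set c : ℝ := (∑ i, y i) - y j with hcdef
        have hc0 : 0 ≤ c := by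
          have : y j ≤ ∑ i, y i :=
            Finset.single_le_sum (fun i _ => (hyB i (mem_univ i)).1) (Finset.mem_univ j)
          simp [hcdef]; linarith
        have hupd : ∀ ξ ∈ Icc (0:ℝ) (y j), Function.update y j ξ ∈ B := by
          intro ξ hξ i _
          rcases eq_or_ne i j with rfl | hij
          · simpa using ⟨hξ.1, hξ.2.trans hyj.2⟩
          · simp only [Function.update_of_ne hij]
            exact hyB i (mem_univ i)
        have hsum : ∀ ξ : ℝ, ∑ i, Function.update y j ξ i = c + ξ := by
          intro ξ
          rw [Finset.sum_update_of_mem (Finset.mem_univ j),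
            Finset.sum_sdiff_eq_sub (Finset.singleton_subset_iff.2 (Finset.mem_univ j)),
            Finset.sum_singleton]
          simp [hcdef]; ring
        have hptwise : ∀ ξ ∈ Icc (0:ℝ) (y j), Δ (Function.update y j ξ) ≤ g (c + ξ) :=
          fun ξ hξ => hΔg _ (hupd ξ hξ) _ (le_of_eq (hsum ξ))
        have hpathcont : Continuous (fun ξ : ℝ => Function.update y j ξ) :=
          continuous_const.update j continuous_id
        have hint1 : IntervalIntegrable (fun ξ => Δ (Function.update y j ξ)) volume 0 (y j) := by
          apply ContinuousOn.intervalIntegrable_of_Icc hyj0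
          exact hcont.comp hpathcont.continuousOn (fun ξ hξ => hupd ξ hξ)
        have hint2 : IntervalIntegrable (fun ξ => g (c + ξ)) volume 0 (y j) :=
          (hgmono.comp (fun a b hab => by simpa using add_le_add_left hab c : Monotone fun ξ : ℝ => c + ξ)).intervalIntegrable
        have step1 : (∫ ξ in (0:ℝ)..(y j), Δ (Function.update y j ξ))
            ≤ ∫ ξ in (0:ℝ)..(y j), g (c + ξ) :=
          intervalIntegral.integral_mono_on hyj0 hint1 hint2 hptwise
        have step2 : (∫ ξ in (0:ℝ)..(y j), g (c + ξ)) = ∫ u in c..(c + y j), g u := by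
          have := intervalIntegral.integral_comp_add_right (a := (0:ℝ)) (b := y j) g c
          simpa [add_comm] using this
        have step3 : (∫ u in c..(c + y j), g u) ≤ ∫ s in (0:ℝ)..t, g s := by
          apply hsub c (c + y j) t hc0 (by linarith)
          have : c + y j = ∑ i, y i := by simp [hcdef]
          linarith [this ▸ hyt]
        linarith
      have hsumle : (∑ j, ∫ ξ in (0:ℝ)..(y j), Δ (Function.update y j ξ))
          ≤ (d : ℝ) * ∫ s in (0:ℝ)..t, g s := by
        calc (∑ j, ∫ ξ in (0:ℝ)..(y j), Δ (Function.update y j ξ))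
            ≤ ∑ _j : Fin d, ∫ s in (0:ℝ)..t, g s :=
              Finset.sum_le_sum (fun j _ => key j)
          _ = (d : ℝ) * ∫ s in (0:ℝ)..t, g s := by
              simp [Finset.sum_const, nsmul_eq_mul]
      have := hineq y hyB
      have h2 : L * (∑ j, ∫ ξ in (0:ℝ)..(y j), Δ (Function.update y j ξ))
          ≤ L * ((d:ℝ) * ∫ s in (0:ℝ)..t, g s) :=
        mul_le_mul_of_nonneg_left hsumle hL
      nlinarith
  -- the case L = 0
  rcases eq_or_lt_of_le hL with hL0 | hLpos
  · have hS0 : 0 ≤ ∑ i, x₀ i :=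
      Finset.sum_nonneg fun i _ => (hx₀ i (mem_univ i)).1
    have h1 : Δ x₀ ≤ g (∑ i, x₀ i) := hΔg x₀ hx₀ _ le_rfl
    have h2 := hcore (∑ i, x₀ i) hS0
    rw [← hL0] at h2
    simp at h2
    have h3 : (1:ℝ) ≤ Real.exp (2 * d * L * ∑ i, x₀ i) := by
      rw [← Real.exp_zero]
      apply Real.exp_le_exp.2
      rw [← hL0]; ring_nf; simp
    nlinarith
  · -- main case: L > 0
    set c : ℝ := (d : ℝ) * L with hcdef
    have hc : 0 < c := by
      have : (1:ℝ) ≤ (d:ℝ) := by exact_mod_cast hd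
      positivity
    have hcore' : ∀ t : ℝ, 0 ≤ t → g t ≤ c * (∫ s in (0:ℝ)..t, g s) + Q := hcore
    -- induction
    have hind : ∀ n : ℕ, ∀ t : ℝ, 0 ≤ t →
        g t ≤ Q * Real.exp (c * t) + M * (c * t) ^ n / n.factorial := by
      intro n
      induction n with
      | zero =>
        intro t ht
        have := hgM t
        have he : 0 ≤ Q * Real.exp (c * t) := by positivity
        simp only [pow_zero, Nat.factorial_zero, Nat.cast_one, mul_one]
        linarith [he]
      | succ n ih =>
        intro t ht
        have hcont1 : Continuous fun s : ℝ => Q * Real.exp (c * s) :=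
          continuous_const.mul (Real.continuous_exp.comp (continuous_const.mul continuous_id))
        have hcont2 : Continuous fun s : ℝ => M * (c * s) ^ n / (n.factorial : ℝ) :=
          (continuous_const.mul ((continuous_const.mul continuous_id).pow n)).div_const _
        have hcont3 : Continuous fun s : ℝ => (M * c ^ n / (n.factorial : ℝ)) * s ^ n :=
          continuous_const.mul (continuous_pow n)
        have hintle : (∫ s in (0:ℝ)..t, g s)
            ≤ ∫ s in (0:ℝ)..t, (Q * Real.exp (c * s) + M * (c * s) ^ n / n.factorial) := by
          apply intervalIntegral.integral_mono_on ht (hgint 0 t)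
          · exact (hcont1.add hcont2).intervalIntegrable _ _
          · intro s hs
            exact ih s hs.1
        have hI1 : (∫ s in (0:ℝ)..t, Real.exp (c * s)) = c⁻¹ * (Real.exp (c * t) - 1) := by
          rw [intervalIntegral.integral_comp_mul_left Real.exp hc.ne']
          simp [integral_exp, smul_eq_mul]
        have hI2 : (∫ s in (0:ℝ)..t, s ^ n) = t ^ (n + 1) / (n + 1) := by
          simp [integral_pow]
        have hsplit : (∫ s in (0:ℝ)..t, (Q * Real.exp (c * s) + M * (c * s) ^ n / n.factorial))
            = Q * (c⁻¹ * (Real.exp (c * t) - 1))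
              + (M * c ^ n / n.factorial) * (t ^ (n + 1) / (n + 1)) := by
          have hcongr : ∀ s : ℝ, Q * Real.exp (c * s) + M * (c * s) ^ n / n.factorial
              = Q * Real.exp (c * s) + (M * c ^ n / n.factorial) * s ^ n := by
            intro s; rw [mul_pow]; ring
          rw [intervalIntegral.integral_congr (fun s _ => hcongr s)]
          rw [intervalIntegral.integral_add (hcont1.intervalIntegrable _ _)
            (hcont3.intervalIntegrable _ _)]
          rw [intervalIntegral.integral_const_mul, intervalIntegral.integral_const_mul, hI1, hI2]
        have h1 := hcore' t ht
        have h2 : c * (∫ s in (0:ℝ)..t, g s)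
            ≤ c * (Q * (c⁻¹ * (Real.exp (c * t) - 1))
              + (M * c ^ n / n.factorial) * (t ^ (n + 1) / (n + 1))) := by
          rw [← hsplit]
          exact mul_le_mul_of_nonneg_left hintle hc.le
        have heq : c * (Q * (c⁻¹ * (Real.exp (c * t) - 1))
              + (M * c ^ n / n.factorial) * (t ^ (n + 1) / (n + 1))) + Q
            = Q * Real.exp (c * t) + M * (c * t) ^ (n + 1) / (n + 1).factorial := by
          have hfac : ((n + 1).factorial : ℝ) = (n + 1) * n.factorial := by
            rw [Nat.factorial_succ]; push_cast; ring
          have hfacne : (n.factorial : ℝ) ≠ 0 := by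
            exact_mod_cast Nat.factorial_ne_zero n
          have hn1 : ((n:ℝ) + 1) ≠ 0 := by positivity
          rw [hfac, mul_pow]
          field_simp
          ring
        linarith
    -- pass to the limit
    have hS0 : 0 ≤ ∑ i, x₀ i :=
      Finset.sum_nonneg fun i _ => (hx₀ i (mem_univ i)).1
    set T : ℝ := ∑ i, x₀ i with hTdef
    have hglim : g T ≤ Q * Real.exp (c * T) := by
      have htend : Tendsto (fun n : ℕ => Q * Real.exp (c * T) + M * (c * T) ^ n / n.factorial)
          atTop (nhds (Q * Real.exp (c * T) + M * 0)) := by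
        apply Tendsto.add tendsto_const_nhds
        have := FloorSemiring.tendsto_pow_div_factorial_atTop (K := ℝ) (c * T)
        have h2 := this.const_mul M
        simpa [mul_div_assoc] using h2
      have := ge_of_tendsto' htend (fun n => hind n T hS0)
      simpa using this
    have h1 : Δ x₀ ≤ g T := hΔg x₀ hx₀ _ le_rfl
    have hee : Real.exp (c * T) ≤ Real.exp (2 * d * L * T) := by
      apply Real.exp_le_exp.2
      have : c * T ≤ 2 * c * T := by nlinarith
      calc c * T ≤ 2 * c * T := this
        _ = 2 * d * L * T := by rw [hcdef]; ring
    have hQe : Q * Real.exp (c * T) ≤ 2 * Q * Real.exp (2 * d * L * T) := by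
      nlinarith [Real.exp_pos (c * T), Real.exp_pos (2 * d * L * T)]
    linarith
end

section
/- Let Δ : [0,r]×[0,r] → ℝ be continuous, nonnegative, and satisfy Δ(x,y) ≤ L(∫_0^x Δ(ξ,y)dξ + ∫_0^y Δ(x,η)dη) for all (x,y), with constant L ≥ 0. Then Δ ≡ 0. -/
open MeasureTheory

/-- Two-dimensional Gronwall inequality: a continuous nonnegative function on `[0,r]²`
dominated by `L` times the sum of its partial integrals vanishes identically. -/
theorem stmt3 (r L : ℝ) (hr : 0 < r) (hL : 0 ≤ L) (Δ : ℝ → ℝ → ℝ)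
    (hcont : ContinuousOn (fun p : ℝ × ℝ => Δ p.1 p.2) (Set.Icc 0 r ×ˢ Set.Icc 0 r))
    (hnonneg : ∀ x ∈ Set.Icc (0:ℝ) r, ∀ y ∈ Set.Icc (0:ℝ) r, 0 ≤ Δ x y)
    (hineq : ∀ x ∈ Set.Icc (0:ℝ) r, ∀ y ∈ Set.Icc (0:ℝ) r,
      Δ x y ≤ L * ((∫ ξ in (0:ℝ)..x, Δ ξ y) + ∫ η in (0:ℝ)..y, Δ x η)) :
    ∀ x ∈ Set.Icc (0:ℝ) r, ∀ y ∈ Set.Icc (0:ℝ) r, Δ x y = 0 := by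
  -- a uniform bound
  obtain ⟨M0, hM0⟩ := ((isCompact_Icc.prod isCompact_Icc).exists_bound_of_continuousOn hcont)
  set M : ℝ := max M0 0 with hM
  have hMnn : 0 ≤ M := le_max_right _ _
  have hMb : ∀ x ∈ Set.Icc (0:ℝ) r, ∀ y ∈ Set.Icc (0:ℝ) r, Δ x y ≤ M := by
    intro x hx y hy
    have := hM0 (x, y) (Set.mk_mem_prod hx hy)
    calc Δ x y ≤ ‖Δ x y‖ := Real.le_norm_self _
    _ ≤ M0 := this
    _ ≤ M := le_max_left _ _
  -- continuity in each variable
  have hcx : ∀ y ∈ Set.Icc (0:ℝ) r, ContinuousOn (fun ξ => Δ ξ y) (Set.Icc 0 r) := by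
    intro y hy
    exact hcont.comp (Continuous.continuousOn (by fun_prop)) (fun ξ hξ => Set.mk_mem_prod hξ hy)
  have hcy : ∀ x ∈ Set.Icc (0:ℝ) r, ContinuousOn (fun η => Δ x η) (Set.Icc 0 r) := by
    intro x hx
    exact hcont.comp (Continuous.continuousOn (by fun_prop)) (fun η hη => Set.mk_mem_prod hx hη)
  -- key induction
  have key : ∀ n : ℕ, ∀ x ∈ Set.Icc (0:ℝ) r, ∀ y ∈ Set.Icc (0:ℝ) r,
      Δ x y ≤ M * (2*L)^n * (x+y)^n / (n.factorial:ℝ) := by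
    intro n
    induction n with
    | zero => intro x hx y hy; simpa using hMb x hx y hy
    | succ n ih =>
      intro x hx y hy
      set C : ℝ := M * (2*L)^n / (n.factorial:ℝ) with hC
      have hCnn : 0 ≤ C := by positivity
      have hxy : 0 ≤ x + y := add_nonneg hx.1 hy.1
      -- bound for first integral
      have I1 : (∫ ξ in (0:ℝ)..x, Δ ξ y) ≤ C * (x+y)^(n+1) / (n+1) := by
        have hmono : (∫ ξ in (0:ℝ)..x, Δ ξ y) ≤ ∫ ξ in (0:ℝ)..x, C * (ξ+y)^n := by
          apply intervalIntegral.integral_mono_on hx.1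
          · exact ((hcx y hy).mono (Set.Icc_subset_Icc le_rfl hx.2)).intervalIntegrable_of_Icc hx.1
          · apply Continuous.intervalIntegrable; fun_prop
          · intro ξ hξ
            have hξr : ξ ∈ Set.Icc (0:ℝ) r := ⟨hξ.1, hξ.2.trans hx.2⟩
            calc Δ ξ y ≤ M * (2*L)^n * (ξ+y)^n / (n.factorial:ℝ) := ih ξ hξr y hy
            _ = C * (ξ+y)^n := by ring
        have hcomp : (∫ ξ in (0:ℝ)..x, (ξ+y)^n) = ((x+y)^(n+1) - y^(n+1)) / (n+1) := by
          rw [intervalIntegral.integral_comp_add_right (fun t => t^n) y]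
          simp [integral_pow]
        calc (∫ ξ in (0:ℝ)..x, Δ ξ y) ≤ ∫ ξ in (0:ℝ)..x, C * (ξ+y)^n := hmono
        _ = C * (((x+y)^(n+1) - y^(n+1)) / (n+1)) := by
            rw [intervalIntegral.integral_const_mul, hcomp]
        _ ≤ C * ((x+y)^(n+1) / (n+1)) := by
            apply mul_le_mul_of_nonneg_left _ hCnn
            apply div_le_div_of_nonneg_right ?_ (by positivity)
            exact sub_le_self _ (pow_nonneg hy.1 _)
        _ = C * (x+y)^(n+1) / (n+1) := by ring
      have I2 : (∫ η in (0:ℝ)..y, Δ x η) ≤ C * (x+y)^(n+1) / (n+1) := by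
        have hmono : (∫ η in (0:ℝ)..y, Δ x η) ≤ ∫ η in (0:ℝ)..y, C * (x+η)^n := by
          apply intervalIntegral.integral_mono_on hy.1
          · exact ((hcy x hx).mono (Set.Icc_subset_Icc le_rfl hy.2)).intervalIntegrable_of_Icc hy.1
          · apply Continuous.intervalIntegrable; fun_prop
          · intro η hη
            have hηr : η ∈ Set.Icc (0:ℝ) r := ⟨hη.1, hη.2.trans hy.2⟩
            calc Δ x η ≤ M * (2*L)^n * (x+η)^n / (n.factorial:ℝ) := ih x hx η hηr
            _ = C * (x+η)^n := by ring
        have hcomp : (∫ η in (0:ℝ)..y, (x+η)^n) = ((x+y)^(n+1) - x^(n+1)) / (n+1) := by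
          have : (∫ η in (0:ℝ)..y, (x+η)^n) = ∫ η in (0:ℝ)..y, (η+x)^n := by
            congr 1; ext η; ring_nf
          rw [this, intervalIntegral.integral_comp_add_right (fun t => t^n) x]
          simp [integral_pow, add_comm x y]
        calc (∫ η in (0:ℝ)..y, Δ x η) ≤ ∫ η in (0:ℝ)..y, C * (x+η)^n := hmono
        _ = C * (((x+y)^(n+1) - x^(n+1)) / (n+1)) := by
            rw [intervalIntegral.integral_const_mul, hcomp]
        _ ≤ C * ((x+y)^(n+1) / (n+1)) := by
            apply mul_le_mul_of_nonneg_left _ hCnn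
            apply div_le_div_of_nonneg_right ?_ (by positivity)
            exact sub_le_self _ (pow_nonneg hx.1 _)
        _ = C * (x+y)^(n+1) / (n+1) := by ring
      calc Δ x y ≤ L * ((∫ ξ in (0:ℝ)..x, Δ ξ y) + ∫ η in (0:ℝ)..y, Δ x η) := hineq x hx y hy
      _ ≤ L * (C * (x+y)^(n+1) / (n+1) + C * (x+y)^(n+1) / (n+1)) := by
          apply mul_le_mul_of_nonneg_left (add_le_add I1 I2) hL
      _ = M * (2*L)^(n+1) * (x+y)^(n+1) / ((n+1).factorial:ℝ) := by
          rw [hC]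
          rw [Nat.factorial_succ]; push_cast
          field_simp
          ring
  intro x hx y hy
  have hxy : 0 ≤ x + y := add_nonneg hx.1 hy.1
  have hlim : Filter.Tendsto (fun n : ℕ => M * ((2*L*(x+y))^n / (n.factorial:ℝ))) Filter.atTop (nhds 0) := by
    simpa using (FloorSemiring.tendsto_pow_div_factorial_atTop (2*L*(x+y))).const_mul M
  have hle : Δ x y ≤ 0 := by
    apply le_of_tendsto_of_tendsto tendsto_const_nhds hlim
    filter_upwards with n
    calc Δ x y ≤ M * (2*L)^n * (x+y)^n / (n.factorial:ℝ) := key n x hx y hy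
    _ = M * ((2*L*(x+y))^n / (n.factorial:ℝ)) := by rw [mul_pow, mul_pow]; ring
  exact le_antisymm hle (hnonneg x hx y hy)
end

section
/- Let f^ε, g^ε : 𝒳 × 𝒳 → 𝒳 (for ε ∈ (0,ε₀)) be families of maps with a common global Lipschitz constant ℒ and with sup_ε max(|f^ε(0,0)|, |g^ε(0,0)|) < ∞. Let (a^ε, b^ε) solve the discrete system δ_y^ε a^ε = f^ε(a^ε, b^ε), δ_x^ε b^ε = g^ε(a^ε, b^ε) on Ω^ε(r) with initial data bounded by M₀ > 0 in norm (|a^ε(x,0)|, |b^ε(0,y)| ≤ M₀). Then there is a constant C, independent of ε, such that |a^ε(x,y)| ≤ C and |b^ε(x,y)| ≤ C for all (x,y) ∈ Ω^ε(r). In fact one can take C = M₀·exp(4𝒦r) with 𝒦 = (1/M₀)·sup_ε(|f^ε(0,0)| + |g^ε(0,0)|) + 2ℒ. -/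
set_option maxHeartbeats 1000000


/-- A priori bound for solutions of the discrete 2D hyperbolic system when the
right-hand sides have a common global Lipschitz constant `ℒ`:
`‖a^ε‖, ‖b^ε‖ ≤ C = M₀·exp(4𝒦r)` with `𝒦 = S/M₀ + 2ℒ`,
`S = sup_ε (‖f^ε(0,0)‖ + ‖g^ε(0,0)‖)`, uniformly in `ε`. -/
theorem stmt5 {X : Type*} [NormedAddCommGroup X] [NormedSpace ℝ X]
    (ε₀ r M₀ ℒ S : ℝ) (hε₀ : 0 < ε₀) (hr : 0 < r) (hM₀ : 0 < M₀) (hℒ : 0 ≤ ℒ)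
    (f g : ℝ → X → X → X)
    (hLip : ∀ ε ∈ Set.Ioo 0 ε₀, ∀ a b a' b' : X,
      ‖f ε a b - f ε a' b'‖ ≤ ℒ * (‖a - a'‖ + ‖b - b'‖) ∧
      ‖g ε a b - g ε a' b'‖ ≤ ℒ * (‖a - a'‖ + ‖b - b'‖))
    (hS : ∀ ε ∈ Set.Ioo 0 ε₀, ‖f ε 0 0‖ + ‖g ε 0 0‖ ≤ S) :
    ∀ ε ∈ Set.Ioo 0 ε₀, ∀ a b : ℕ → ℕ → X,
      (∀ i j : ℕ, (i : ℝ) * ε ≤ r → ((j : ℝ) + 1) * ε ≤ r →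
        a i (j + 1) = a i j + ε • f ε (a i j) (b i j)) →
      (∀ i j : ℕ, ((i : ℝ) + 1) * ε ≤ r → (j : ℝ) * ε ≤ r →
        b (i + 1) j = b i j + ε • g ε (a i j) (b i j)) →
      (∀ i : ℕ, (i : ℝ) * ε ≤ r → ‖a i 0‖ ≤ M₀) →
      (∀ j : ℕ, (j : ℝ) * ε ≤ r → ‖b 0 j‖ ≤ M₀) →
      ∀ i j : ℕ, (i : ℝ) * ε ≤ r → (j : ℝ) * ε ≤ r →
        ‖a i j‖ ≤ M₀ * Real.exp (4 * (S / M₀ + 2 * ℒ) * r) ∧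
        ‖b i j‖ ≤ M₀ * Real.exp (4 * (S / M₀ + 2 * ℒ) * r) := by
  intro ε hε a b ha hb ha0 hb0
  obtain ⟨hε1, hε2⟩ := hε
  have hS0 : 0 ≤ S :=
    le_trans (by positivity) (hS (ε₀/2) ⟨by positivity, by linarith⟩)
  set K : ℝ := S / M₀ + 2 * ℒ with hKdef
  clear_value K
  have hSM : 0 ≤ S / M₀ := div_nonneg hS0 hM₀.le
  have hK : 0 ≤ K := by rw [hKdef]; linarith
  have hεK : 0 ≤ ε * K := mul_nonneg hε1.le hK
  -- norm bound for f, g at arbitrary points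
  have hfb : ∀ u v : X, ‖f ε u v‖ ≤ S + ℒ * (‖u‖ + ‖v‖) := by
    intro u v
    have h1 := (hLip ε ⟨hε1, hε2⟩ u v 0 0).1
    have h2 := hS ε ⟨hε1, hε2⟩
    have h4 := norm_sub_norm_le (f ε u v) (f ε 0 0)
    have h3 : ‖f ε u v‖ ≤ ‖f ε 0 0‖ + ℒ * (‖u - 0‖ + ‖v - 0‖) := by linarith
    simp only [sub_zero] at h3
    have := norm_nonneg (g ε 0 0)
    linarith
  have hgb : ∀ u v : X, ‖g ε u v‖ ≤ S + ℒ * (‖u‖ + ‖v‖) := by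
    intro u v
    have h1 := (hLip ε ⟨hε1, hε2⟩ u v 0 0).2
    have h2 := hS ε ⟨hε1, hε2⟩
    have h4 := norm_sub_norm_le (g ε u v) (g ε 0 0)
    have h3 : ‖g ε u v‖ ≤ ‖g ε 0 0‖ + ℒ * (‖u - 0‖ + ‖v - 0‖) := by linarith
    simp only [sub_zero] at h3
    have := norm_nonneg (f ε 0 0)
    linarith
  have key : ∀ n : ℕ, ∀ i j : ℕ, i + j = n → (i : ℝ) * ε ≤ r → (j : ℝ) * ε ≤ r →
      ‖a i j‖ ≤ M₀ * (1 + ε * K) ^ n ∧ ‖b i j‖ ≤ M₀ * (1 + ε * K) ^ n := by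
    intro n
    induction n with
    | zero =>
      intro i j hij hi hj
      obtain ⟨rfl, rfl⟩ := Nat.add_eq_zero.mp hij
      simpa using ⟨ha0 0 hi, hb0 0 hj⟩
    | succ n ih =>
      intro i j hij hi hj
      have hone : (1:ℝ) ≤ (1 + ε * K) ^ n := one_le_pow₀ (by linarith)
      have hone1 : (1:ℝ) ≤ (1 + ε * K) ^ (n + 1) := one_le_pow₀ (by linarith)
      have hc : S / M₀ * M₀ = S := div_mul_cancel₀ S hM₀.ne'
      have hSle : S ≤ S / M₀ * (M₀ * (1 + ε * K) ^ n) := by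
        calc S = S / M₀ * M₀ * 1 := by rw [hc, mul_one]
          _ ≤ S / M₀ * M₀ * (1 + ε * K) ^ n :=
              mul_le_mul_of_nonneg_left hone (by rw [hc]; exact hS0)
          _ = _ := by ring
      constructor
      · rcases j with _ | j'
        · have h1 := ha0 i hi
          have h2 : M₀ ≤ M₀ * (1 + ε * K) ^ (n + 1) :=
            le_mul_of_one_le_right hM₀.le hone1
          linarith
        · have hj' : (j' : ℝ) * ε ≤ r := by
            have : ((j' : ℝ) + 1) * ε ≤ r := by push_cast at hj; linarith
            nlinarith
          obtain ⟨hA, hB⟩ := ih i j' (by omega) hi hj'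
          have heq := ha i j' hi (by push_cast at hj ⊢; linarith)
          have hf := hfb (a i j') (b i j')
          have hna : ‖a i (j' + 1)‖ ≤ ‖a i j'‖ + ε * ‖f ε (a i j') (b i j')‖ := by
            rw [heq]
            calc ‖a i j' + ε • f ε (a i j') (b i j')‖
                ≤ ‖a i j'‖ + ‖ε • f ε (a i j') (b i j')‖ := norm_add_le _ _
              _ = ‖a i j'‖ + ε * ‖f ε (a i j') (b i j')‖ := by
                  rw [norm_smul, Real.norm_eq_abs, abs_of_pos hε1]
          have hstep : M₀ * (1 + ε * K) ^ (n + 1)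
              = M₀ * (1 + ε * K) ^ n + ε * (S / M₀) * (M₀ * (1 + ε * K) ^ n)
                + 2 * ℒ * ε * (M₀ * (1 + ε * K) ^ n) := by
            rw [pow_succ, hKdef]; ring
          rw [hstep]
          have hfn : ε * ‖f ε (a i j') (b i j')‖ ≤ ε * (S + ℒ * (‖a i j'‖ + ‖b i j'‖)) :=
            mul_le_mul_of_nonneg_left hf hε1.le
          nlinarith [mul_le_mul_of_nonneg_left hSle hε1.le,
            mul_le_mul_of_nonneg_left (add_le_add hA hB) (mul_nonneg hε1.le hℒ),
            mul_nonneg hε1.le hℒ]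
      · rcases i with _ | i'
        · have h1 := hb0 j hj
          have h2 : M₀ ≤ M₀ * (1 + ε * K) ^ (n + 1) :=
            le_mul_of_one_le_right hM₀.le hone1
          linarith
        · have hi' : (i' : ℝ) * ε ≤ r := by
            have : ((i' : ℝ) + 1) * ε ≤ r := by push_cast at hi; linarith
            nlinarith
          obtain ⟨hA, hB⟩ := ih i' j (by omega) hi' hj
          have heq := hb i' j (by push_cast at hi ⊢; linarith) hj
          have hg := hgb (a i' j) (b i' j)
          have hnb : ‖b (i' + 1) j‖ ≤ ‖b i' j‖ + ε * ‖g ε (a i' j) (b i' j)‖ := by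
            rw [heq]
            calc ‖b i' j + ε • g ε (a i' j) (b i' j)‖
                ≤ ‖b i' j‖ + ‖ε • g ε (a i' j) (b i' j)‖ := norm_add_le _ _
              _ = ‖b i' j‖ + ε * ‖g ε (a i' j) (b i' j)‖ := by
                  rw [norm_smul, Real.norm_eq_abs, abs_of_pos hε1]
          have hstep : M₀ * (1 + ε * K) ^ (n + 1)
              = M₀ * (1 + ε * K) ^ n + ε * (S / M₀) * (M₀ * (1 + ε * K) ^ n)
                + 2 * ℒ * ε * (M₀ * (1 + ε * K) ^ n) := by
            rw [pow_succ, hKdef]; ring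
          rw [hstep]
          have hgn : ε * ‖g ε (a i' j) (b i' j)‖ ≤ ε * (S + ℒ * (‖a i' j‖ + ‖b i' j‖)) :=
            mul_le_mul_of_nonneg_left hg hε1.le
          nlinarith [mul_le_mul_of_nonneg_left hSle hε1.le,
            mul_le_mul_of_nonneg_left (add_le_add hA hB) (mul_nonneg hε1.le hℒ),
            mul_nonneg hε1.le hℒ]
  intro i j hi hj
  obtain ⟨hA, hB⟩ := key (i + j) i j rfl hi hj
  have hpow : (1 + ε * K) ^ (i + j) ≤ Real.exp (4 * K * r) := by
    calc (1 + ε * K) ^ (i + j) ≤ Real.exp (ε * K) ^ (i + j) := by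
          apply pow_le_pow_left₀ (by linarith)
          linarith [Real.add_one_le_exp (ε * K)]
      _ = Real.exp (((i + j : ℕ) : ℝ) * (ε * K)) :=
          (Real.exp_nat_mul (ε * K) (i + j)).symm
      _ ≤ Real.exp (4 * K * r) := by
          apply Real.exp_le_exp.mpr
          push_cast
          have h1 : ((i : ℝ) + (j : ℝ)) * ε ≤ 2 * r := by linarith
          nlinarith
  have hM : M₀ * (1 + ε * K) ^ (i + j) ≤ M₀ * Real.exp (4 * K * r) :=
    mul_le_mul_of_nonneg_left hpow hM₀.le
  exact ⟨hA.trans hM, hB.trans hM⟩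
end

section
/- Let f^ε, g^ε : 𝒳 × 𝒳 → 𝒳 be uniformly bounded by ℱ(P₀) := sup_ε sup_{|a|,|b| ≤ P₀}{|f^ε(a,b)|, |g^ε(a,b)|} < ∞ on the ball of radius P₀, and suppose the discrete initial data satisfy |a^ε(x,0)|, |b^ε(0,y)| ≤ M₀ with M₀ < P₀. Set r̄ = (P₀ − M₀)/ℱ(P₀). Then the solutions of the discrete system δ_y^ε a^ε = f^ε(a^ε,b^ε), δ_x^ε b^ε = g^ε(a^ε,b^ε) satisfy |a^ε(x,y)| ≤ M₀ + y·ℱ(P₀) ≤ P₀ and |b^ε(x,y)| ≤ M₀ + x·ℱ(P₀) ≤ P₀ for all (x,y) ∈ Ω^ε(r̄). -/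
/-- A priori bound for solutions of the discrete 2D hyperbolic system with right-hand
sides bounded by `F = ℱ(P₀)` on the ball of radius `P₀`: on `Ω^ε(r̄)` with
`r̄ = (P₀ − M₀)/F` one has `‖a^ε(x,y)‖ ≤ M₀ + y·F ≤ P₀`, `‖b^ε(x,y)‖ ≤ M₀ + x·F ≤ P₀`. -/
theorem stmt6 {X : Type*} [NormedAddCommGroup X] [NormedSpace ℝ X]
    (ε₀ M₀ P₀ F : ℝ) (hε₀ : 0 < ε₀) (hM₀ : 0 < M₀) (hMP : M₀ < P₀) (hF : 0 < F)
    (f g : ℝ → X → X → X)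
    (hbound : ∀ ε ∈ Set.Ioo 0 ε₀, ∀ a b : X, ‖a‖ ≤ P₀ → ‖b‖ ≤ P₀ →
      ‖f ε a b‖ ≤ F ∧ ‖g ε a b‖ ≤ F) :
    ∀ ε ∈ Set.Ioo 0 ε₀, ∀ a b : ℕ → ℕ → X,
      (∀ i j : ℕ, (i : ℝ) * ε ≤ (P₀ - M₀) / F → ((j : ℝ) + 1) * ε ≤ (P₀ - M₀) / F →
        a i (j + 1) = a i j + ε • f ε (a i j) (b i j)) →
      (∀ i j : ℕ, ((i : ℝ) + 1) * ε ≤ (P₀ - M₀) / F → (j : ℝ) * ε ≤ (P₀ - M₀) / F →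
        b (i + 1) j = b i j + ε • g ε (a i j) (b i j)) →
      (∀ i : ℕ, (i : ℝ) * ε ≤ (P₀ - M₀) / F → ‖a i 0‖ ≤ M₀) →
      (∀ j : ℕ, (j : ℝ) * ε ≤ (P₀ - M₀) / F → ‖b 0 j‖ ≤ M₀) →
      ∀ i j : ℕ, (i : ℝ) * ε ≤ (P₀ - M₀) / F → (j : ℝ) * ε ≤ (P₀ - M₀) / F →
        (‖a i j‖ ≤ M₀ + (j : ℝ) * ε * F ∧ ‖a i j‖ ≤ P₀) ∧
        (‖b i j‖ ≤ M₀ + (i : ℝ) * ε * F ∧ ‖b i j‖ ≤ P₀) := by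
  intro ε hε a b hra hrb ha0 hb0
  obtain ⟨hε1, hε2⟩ := hε
  have hP : ∀ t : ℝ, t ≤ (P₀ - M₀) / F → M₀ + t * F ≤ P₀ := by
    intro t ht
    have := (le_div_iff₀ hF).mp ht
    linarith
  suffices key : ∀ n i j : ℕ, i + j = n → (i : ℝ) * ε ≤ (P₀ - M₀) / F →
      (j : ℝ) * ε ≤ (P₀ - M₀) / F →
      (‖a i j‖ ≤ M₀ + (j : ℝ) * ε * F ∧ ‖a i j‖ ≤ P₀) ∧
      (‖b i j‖ ≤ M₀ + (i : ℝ) * ε * F ∧ ‖b i j‖ ≤ P₀) by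
    intro i j hi hj
    exact key (i + j) i j rfl hi hj
  intro n
  induction n using Nat.strong_induction_on with
  | _ n IH =>
    intro i j hn hi hj
    constructor
    · -- bound on a i j
      cases j with
      | zero =>
        have h0 := ha0 i hi
        constructor
        · simpa using h0
        · linarith
      | succ j' =>
        have hj' : (j' : ℝ) * ε ≤ (P₀ - M₀) / F := by
          refine le_trans ?_ hj
          push_cast
          nlinarith
        have hjc : ((j' : ℝ) + 1) * ε ≤ (P₀ - M₀) / F := by
          push_cast at hj ⊢; linarith
        obtain ⟨⟨haj, haP⟩, ⟨hbj, hbP⟩⟩ :=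
          IH (i + j') (by omega) i j' rfl hi hj'
        have hfb := (hbound ε ⟨hε1, hε2⟩ (a i j') (b i j') haP hbP).1
        have heq := hra i j' hi hjc
        have hnorm : ‖a i (j' + 1)‖ ≤ ‖a i j'‖ + ε * F := by
          rw [heq]
          calc ‖a i j' + ε • f ε (a i j') (b i j')‖
              ≤ ‖a i j'‖ + ‖ε • f ε (a i j') (b i j')‖ := norm_add_le _ _
            _ ≤ ‖a i j'‖ + ε * F := by
                rw [norm_smul, Real.norm_of_nonneg hε1.le]
                have := mul_le_mul_of_nonneg_left hfb hε1.le
                linarith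
        have h1 : ‖a i (j' + 1)‖ ≤ M₀ + ((j' : ℝ) + 1) * ε * F := by
          nlinarith
        constructor
        · push_cast
          exact h1
        · exact le_trans h1 (hP _ hjc)
    · -- bound on b i j
      cases i with
      | zero =>
        have h0 := hb0 j hj
        constructor
        · simpa using h0
        · linarith
      | succ i' =>
        have hi' : (i' : ℝ) * ε ≤ (P₀ - M₀) / F := by
          refine le_trans ?_ hi
          push_cast
          nlinarith
        have hic : ((i' : ℝ) + 1) * ε ≤ (P₀ - M₀) / F := by
          push_cast at hi ⊢; linarith
        obtain ⟨⟨haj, haP⟩, ⟨hbj, hbP⟩⟩ :=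
          IH (i' + j) (by omega) i' j rfl hi' hj
        have hgb := (hbound ε ⟨hε1, hε2⟩ (a i' j) (b i' j) haP hbP).2
        have heq := hrb i' j hic hj
        have hnorm : ‖b (i' + 1) j‖ ≤ ‖b i' j‖ + ε * F := by
          rw [heq]
          calc ‖b i' j + ε • g ε (a i' j) (b i' j)‖
              ≤ ‖b i' j‖ + ‖ε • g ε (a i' j) (b i' j)‖ := norm_add_le _ _
            _ ≤ ‖b i' j‖ + ε * F := by
                rw [norm_smul, Real.norm_of_nonneg hε1.le]
                have := mul_le_mul_of_nonneg_left hgb hε1.le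
                linarith
        have h1 : ‖b (i' + 1) j‖ ≤ M₀ + ((i' : ℝ) + 1) * ε * F := by
          nlinarith
        constructor
        · push_cast
          exact h1
        · exact le_trans h1 (hP _ hic)
end

section
/- Let (a,b) : [0,r]² → 𝒳 × 𝒳 be continuous functions satisfying the integral equations a(x,y) = a₀(x) + ∫_0^y f(a(x,η), b(x,η)) dη and b(x,y) = b₀(y) + ∫_0^x g(a(ξ,y), b(ξ,y)) dξ, where f, g are Lipschitz on the range of (a,b). Then the solution of this system is unique: if (â, b̂) is another continuous pair satisfying the same integral equations with the same data (a₀, b₀, f, g), then a = â and b = b̂ on [0,r]². -/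
open MeasureTheory

/-- Uniqueness for the system of Goursat integral equations: two continuous solution
pairs with the same data `(a₀, b₀, f, g)`, whose ranges lie in a set `K` on which
`f, g` have a common Lipschitz constant `L`, coincide on `[0,r]²`. -/
theorem stmt7 {X : Type*} [NormedAddCommGroup X] [NormedSpace ℝ X] [CompleteSpace X]
    (r L : ℝ) (hr : 0 < r) (hL : 0 ≤ L)
    (f g : X → X → X) (a₀ b₀ : ℝ → X) (K : Set X)
    (a b a' b' : ℝ → ℝ → X)
    (hac : ContinuousOn (fun p : ℝ × ℝ => a p.1 p.2) (Set.Icc 0 r ×ˢ Set.Icc 0 r))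
    (hbc : ContinuousOn (fun p : ℝ × ℝ => b p.1 p.2) (Set.Icc 0 r ×ˢ Set.Icc 0 r))
    (hac' : ContinuousOn (fun p : ℝ × ℝ => a' p.1 p.2) (Set.Icc 0 r ×ˢ Set.Icc 0 r))
    (hbc' : ContinuousOn (fun p : ℝ × ℝ => b' p.1 p.2) (Set.Icc 0 r ×ˢ Set.Icc 0 r))
    (hrange : ∀ x ∈ Set.Icc (0:ℝ) r, ∀ y ∈ Set.Icc (0:ℝ) r,
      a x y ∈ K ∧ b x y ∈ K ∧ a' x y ∈ K ∧ b' x y ∈ K)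
    (hLipf : ∀ p₁ ∈ K, ∀ q₁ ∈ K, ∀ p₂ ∈ K, ∀ q₂ ∈ K,
      ‖f p₁ q₁ - f p₂ q₂‖ ≤ L * (‖p₁ - p₂‖ + ‖q₁ - q₂‖))
    (hLipg : ∀ p₁ ∈ K, ∀ q₁ ∈ K, ∀ p₂ ∈ K, ∀ q₂ ∈ K,
      ‖g p₁ q₁ - g p₂ q₂‖ ≤ L * (‖p₁ - p₂‖ + ‖q₁ - q₂‖))
    (hinta : ∀ x ∈ Set.Icc (0:ℝ) r, ∀ y ∈ Set.Icc (0:ℝ) r,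
      a x y = a₀ x + ∫ η in (0:ℝ)..y, f (a x η) (b x η))
    (hintb : ∀ x ∈ Set.Icc (0:ℝ) r, ∀ y ∈ Set.Icc (0:ℝ) r,
      b x y = b₀ y + ∫ ξ in (0:ℝ)..x, g (a ξ y) (b ξ y))
    (hinta' : ∀ x ∈ Set.Icc (0:ℝ) r, ∀ y ∈ Set.Icc (0:ℝ) r,
      a' x y = a₀ x + ∫ η in (0:ℝ)..y, f (a' x η) (b' x η))
    (hintb' : ∀ x ∈ Set.Icc (0:ℝ) r, ∀ y ∈ Set.Icc (0:ℝ) r,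
      b' x y = b₀ y + ∫ ξ in (0:ℝ)..x, g (a' ξ y) (b' ξ y)) :
    ∀ x ∈ Set.Icc (0:ℝ) r, ∀ y ∈ Set.Icc (0:ℝ) r,
      a x y = a' x y ∧ b x y = b' x y := by
  classical
  set I : Set ℝ := Set.Icc (0:ℝ) r with hI
  have h0I : (0:ℝ) ∈ I := ⟨le_rfl, hr.le⟩
  have hpair : ∀ x ∈ I, Set.MapsTo (fun η : ℝ => (x, η)) I (I ×ˢ I) :=
    fun x hx η hη => ⟨hx, hη⟩
  have hpair' : ∀ y ∈ I, Set.MapsTo (fun ξ : ℝ => (ξ, y)) I (I ×ˢ I) :=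
    fun y hy ξ hξ => ⟨hξ, hy⟩
  -- continuity of partial maps
  have hconx : ∀ (c : ℝ → ℝ → X), ContinuousOn (fun p : ℝ × ℝ => c p.1 p.2) (I ×ˢ I) →
      ∀ x ∈ I, ContinuousOn (fun η => c x η) I := fun c hc x hx =>
    hc.comp ((continuous_const.prodMk continuous_id).continuousOn) (hpair x hx)
  have hcony : ∀ (c : ℝ → ℝ → X), ContinuousOn (fun p : ℝ × ℝ => c p.1 p.2) (I ×ˢ I) →
      ∀ y ∈ I, ContinuousOn (fun ξ => c ξ y) I := fun c hc y hy =>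
    hc.comp ((continuous_id.prodMk continuous_const).continuousOn) (hpair' y hy)
  -- Lipschitz ⇒ continuity on K ×ˢ K
  have hFcont : ∀ (F : X → X → X),
      (∀ p₁ ∈ K, ∀ q₁ ∈ K, ∀ p₂ ∈ K, ∀ q₂ ∈ K,
        ‖F p₁ q₁ - F p₂ q₂‖ ≤ L * (‖p₁ - p₂‖ + ‖q₁ - q₂‖)) →
      ContinuousOn (fun p : X × X => F p.1 p.2) (K ×ˢ K) := by
    intro F hF
    have hLip : LipschitzOnWith (Real.toNNReal (2*L)) (fun p : X × X => F p.1 p.2) (K ×ˢ K) := by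
      rw [lipschitzOnWith_iff_dist_le_mul]
      intro p hp q hq
      have h1 : ‖p.1 - q.1‖ ≤ dist p q := by rw [← dist_eq_norm, Prod.dist_eq]; exact le_max_left _ _
      have h2 : ‖p.2 - q.2‖ ≤ dist p q := by rw [← dist_eq_norm, Prod.dist_eq]; exact le_max_right _ _
      have := hF p.1 hp.1 p.2 hp.2 q.1 hq.1 q.2 hq.2
      rw [dist_eq_norm]
      calc ‖F p.1 p.2 - F q.1 q.2‖ ≤ L * (‖p.1 - q.1‖ + ‖p.2 - q.2‖) := this
        _ ≤ L * (dist p q + dist p q) := by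
            apply mul_le_mul_of_nonneg_left (add_le_add h1 h2) hL
        _ = (2*L) * dist p q := by ring
        _ = (Real.toNNReal (2*L) : ℝ) * dist p q := by
            rw [Real.coe_toNNReal _ (by positivity)]
    exact hLip.continuousOn
  -- the difference function
  set w : ℝ → ℝ → ℝ := fun x y => ‖a x y - a' x y‖ + ‖b x y - b' x y‖ with hwdef
  have hwnn : ∀ x y, 0 ≤ w x y := fun x y => add_nonneg (norm_nonneg _) (norm_nonneg _)
  have hwc : ContinuousOn (fun p : ℝ × ℝ => w p.1 p.2) (I ×ˢ I) :=
    ((hac.sub hac').norm).add ((hbc.sub hbc').norm)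
  have hwx : ∀ x ∈ I, ContinuousOn (fun η => w x η) I := fun x hx =>
    hwc.comp ((continuous_const.prodMk continuous_id).continuousOn) (hpair x hx)
  have hwy : ∀ y ∈ I, ContinuousOn (fun ξ => w ξ y) I := fun y hy =>
    hwc.comp ((continuous_id.prodMk continuous_const).continuousOn) (hpair' y hy)
  -- a uniform bound
  obtain ⟨M, hMb⟩ := (isCompact_Icc.prod isCompact_Icc).exists_bound_of_continuousOn hwc
  have hM : ∀ x ∈ I, ∀ y ∈ I, w x y ≤ M := by
    intro x hx y hy
    have := hMb (x, y) ⟨hx, hy⟩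
    simpa [Real.norm_eq_abs, abs_of_nonneg (hwnn x y)] using this
  have hM0 : 0 ≤ M := le_trans (hwnn 0 0) (hM 0 h0I 0 h0I)
  have huIcc : ∀ t ∈ I, Set.uIcc (0:ℝ) t ⊆ I := by
    intro t ht
    rw [Set.uIcc_of_le ht.1]
    exact Set.Icc_subset_Icc le_rfl ht.2
  -- continuity of composed integrands
  have hfab : ∀ x ∈ I, ContinuousOn (fun η => f (a x η) (b x η)) I := fun x hx =>
    (hFcont f hLipf).comp ((hconx a hac x hx).prodMk (hconx b hbc x hx))
      (fun η hη => ⟨(hrange x hx η hη).1, (hrange x hx η hη).2.1⟩)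
  have hfab' : ∀ x ∈ I, ContinuousOn (fun η => f (a' x η) (b' x η)) I := fun x hx =>
    (hFcont f hLipf).comp ((hconx a' hac' x hx).prodMk (hconx b' hbc' x hx))
      (fun η hη => ⟨(hrange x hx η hη).2.2.1, (hrange x hx η hη).2.2.2⟩)
  have hgab : ∀ y ∈ I, ContinuousOn (fun ξ => g (a ξ y) (b ξ y)) I := fun y hy =>
    (hFcont g hLipg).comp ((hcony a hac y hy).prodMk (hcony b hbc y hy))
      (fun ξ hξ => ⟨(hrange ξ hξ y hy).1, (hrange ξ hξ y hy).2.1⟩)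
  have hgab' : ∀ y ∈ I, ContinuousOn (fun ξ => g (a' ξ y) (b' ξ y)) I := fun y hy =>
    (hFcont g hLipg).comp ((hcony a' hac' y hy).prodMk (hcony b' hbc' y hy))
      (fun ξ hξ => ⟨(hrange ξ hξ y hy).2.2.1, (hrange ξ hξ y hy).2.2.2⟩)
  -- key integral inequalities
  have keyA : ∀ x ∈ I, ∀ y ∈ I, ‖a x y - a' x y‖ ≤ L * ∫ η in (0:ℝ)..y, w x η := by
    intro x hx y hy
    have hint1 : IntervalIntegrable (fun η => f (a x η) (b x η)) volume 0 y :=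
      ((hfab x hx).mono (huIcc y hy)).intervalIntegrable
    have hint2 : IntervalIntegrable (fun η => f (a' x η) (b' x η)) volume 0 y :=
      ((hfab' x hx).mono (huIcc y hy)).intervalIntegrable
    have hdiff : a x y - a' x y
        = ∫ η in (0:ℝ)..y, (f (a x η) (b x η) - f (a' x η) (b' x η)) := by
      rw [intervalIntegral.integral_sub hint1 hint2, hinta x hx y hy, hinta' x hx y hy]
      abel
    rw [hdiff]
    have hintn : IntervalIntegrable
        (fun η => ‖f (a x η) (b x η) - f (a' x η) (b' x η)‖) volume 0 y :=
      ((((hfab x hx).sub (hfab' x hx)).norm).mono (huIcc y hy)).intervalIntegrable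
    have hintw : IntervalIntegrable (fun η => L * w x η) volume 0 y :=
      (((hwx x hx).const_smul L).mono (huIcc y hy)).intervalIntegrable
    calc ‖∫ η in (0:ℝ)..y, (f (a x η) (b x η) - f (a' x η) (b' x η))‖
        ≤ ∫ η in (0:ℝ)..y, ‖f (a x η) (b x η) - f (a' x η) (b' x η)‖ :=
          intervalIntegral.norm_integral_le_integral_norm hy.1
      _ ≤ ∫ η in (0:ℝ)..y, L * w x η := by
          apply intervalIntegral.integral_mono_on hy.1 hintn hintw
          intro η hη
          have hηI : η ∈ I := ⟨hη.1, hη.2.trans hy.2⟩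
          exact hLipf _ (hrange x hx η hηI).1 _ (hrange x hx η hηI).2.1
            _ (hrange x hx η hηI).2.2.1 _ (hrange x hx η hηI).2.2.2
      _ = L * ∫ η in (0:ℝ)..y, w x η := intervalIntegral.integral_const_mul _ _
  have keyB : ∀ x ∈ I, ∀ y ∈ I, ‖b x y - b' x y‖ ≤ L * ∫ ξ in (0:ℝ)..x, w ξ y := by
    intro x hx y hy
    have hint1 : IntervalIntegrable (fun ξ => g (a ξ y) (b ξ y)) volume 0 x :=
      ((hgab y hy).mono (huIcc x hx)).intervalIntegrable
    have hint2 : IntervalIntegrable (fun ξ => g (a' ξ y) (b' ξ y)) volume 0 x :=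
      ((hgab' y hy).mono (huIcc x hx)).intervalIntegrable
    have hdiff : b x y - b' x y
        = ∫ ξ in (0:ℝ)..x, (g (a ξ y) (b ξ y) - g (a' ξ y) (b' ξ y)) := by
      rw [intervalIntegral.integral_sub hint1 hint2, hintb x hx y hy, hintb' x hx y hy]
      abel
    rw [hdiff]
    have hintn : IntervalIntegrable
        (fun ξ => ‖g (a ξ y) (b ξ y) - g (a' ξ y) (b' ξ y)‖) volume 0 x :=
      ((((hgab y hy).sub (hgab' y hy)).norm).mono (huIcc x hx)).intervalIntegrable
    have hintw : IntervalIntegrable (fun ξ => L * w ξ y) volume 0 x :=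
      (((hwy y hy).const_smul L).mono (huIcc x hx)).intervalIntegrable
    calc ‖∫ ξ in (0:ℝ)..x, (g (a ξ y) (b ξ y) - g (a' ξ y) (b' ξ y))‖
        ≤ ∫ ξ in (0:ℝ)..x, ‖g (a ξ y) (b ξ y) - g (a' ξ y) (b' ξ y)‖ :=
          intervalIntegral.norm_integral_le_integral_norm hx.1
      _ ≤ ∫ ξ in (0:ℝ)..x, L * w ξ y := by
          apply intervalIntegral.integral_mono_on hx.1 hintn hintw
          intro ξ hξ
          have hξI : ξ ∈ I := ⟨hξ.1, hξ.2.trans hx.2⟩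
          exact hLipg _ (hrange ξ hξI y hy).1 _ (hrange ξ hξI y hy).2.1
            _ (hrange ξ hξI y hy).2.2.1 _ (hrange ξ hξI y hy).2.2.2
      _ = L * ∫ ξ in (0:ℝ)..x, w ξ y := intervalIntegral.integral_const_mul _ _
  -- the iteration
  have hiter : ∀ n : ℕ, ∀ x ∈ I, ∀ y ∈ I,
      w x y ≤ M * (2*L)^n * (x+y)^n / n.factorial := by
    intro n
    induction n with
    | zero => intro x hx y hy; simpa using hM x hx y hy
    | succ n ih =>
      intro x hx y hy
      have hx0 : 0 ≤ x := hx.1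
      have hy0 : 0 ≤ y := hy.1
      have hfn : (0:ℝ) < n.factorial := by exact_mod_cast n.factorial_pos
      set C : ℝ := M * (2*L)^n / n.factorial with hC
      have hC0 : 0 ≤ C := by positivity
      -- bound for the first integral
      have hbnd : ∀ s ∈ I, ∀ t ∈ I,
          (∫ u in (0:ℝ)..t, (s + u)^n) = ((s+t)^(n+1) - s^(n+1)) / (n+1) := by
        intro s hs t ht
        rw [intervalIntegral.integral_comp_add_left (fun u => u^n) s]
        simp [integral_pow]
      have hInt1 : ∫ η in (0:ℝ)..y, w x η ≤ C * ((x+y)^(n+1) - x^(n+1)) / (n+1) := by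
        have hmono : ∫ η in (0:ℝ)..y, w x η ≤ ∫ η in (0:ℝ)..y, C * (x+η)^n := by
          apply intervalIntegral.integral_mono_on hy0
            (((hwx x hx).mono (huIcc y hy)).intervalIntegrable)
            ((show Continuous fun η : ℝ => C * (x+η)^n by fun_prop).intervalIntegrable 0 y)
          intro η hη
          have hηI : η ∈ I := ⟨hη.1, hη.2.trans hy.2⟩
          have := ih x hx η hηI
          calc w x η ≤ M * (2*L)^n * (x+η)^n / n.factorial := this
            _ = C * (x+η)^n := by rw [hC]; ring
        rw [intervalIntegral.integral_const_mul] at hmono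
        rw [hbnd x hx y hy] at hmono
        calc ∫ η in (0:ℝ)..y, w x η ≤ C * (((x+y)^(n+1) - x^(n+1)) / (n+1)) := hmono
          _ = C * ((x+y)^(n+1) - x^(n+1)) / (n+1) := by ring
      have hInt2 : ∫ ξ in (0:ℝ)..x, w ξ y ≤ C * ((x+y)^(n+1) - y^(n+1)) / (n+1) := by
        have hmono : ∫ ξ in (0:ℝ)..x, w ξ y ≤ ∫ ξ in (0:ℝ)..x, C * (y+ξ)^n := by
          apply intervalIntegral.integral_mono_on hx0
            (((hwy y hy).mono (huIcc x hx)).intervalIntegrable)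
            ((show Continuous fun ξ : ℝ => C * (y+ξ)^n by fun_prop).intervalIntegrable 0 x)
          intro ξ hξ
          have hξI : ξ ∈ I := ⟨hξ.1, hξ.2.trans hx.2⟩
          have := ih ξ hξI y hy
          calc w ξ y ≤ M * (2*L)^n * (ξ+y)^n / n.factorial := this
            _ = C * (y+ξ)^n := by rw [hC]; ring
        rw [intervalIntegral.integral_const_mul] at hmono
        rw [hbnd y hy x hx] at hmono
        calc ∫ ξ in (0:ℝ)..x, w ξ y ≤ C * (((y+x)^(n+1) - y^(n+1)) / (n+1)) := hmono
          _ = C * ((x+y)^(n+1) - y^(n+1)) / (n+1) := by rw [add_comm y x]; ring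
      have hx1 : (0:ℝ) ≤ x^(n+1) := by positivity
      have hy1 : (0:ℝ) ≤ y^(n+1) := by positivity
      have hsum : w x y ≤ L * (C * ((x+y)^(n+1) - x^(n+1)) / (n+1))
          + L * (C * ((x+y)^(n+1) - y^(n+1)) / (n+1)) := by
        have h1 := (keyA x hx y hy).trans (mul_le_mul_of_nonneg_left hInt1 hL)
        have h2 := (keyB x hx y hy).trans (mul_le_mul_of_nonneg_left hInt2 hL)
        exact add_le_add h1 h2
      have hnpos : (0:ℝ) < (n:ℝ) + 1 := by positivity
      calc w x y ≤ L * (C * ((x+y)^(n+1) - x^(n+1)) / (n+1))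
          + L * (C * ((x+y)^(n+1) - y^(n+1)) / (n+1)) := hsum
        _ ≤ L * (C * (x+y)^(n+1) / (n+1)) + L * (C * (x+y)^(n+1) / (n+1)) := by
            gcongr <;> linarith
        _ = 2 * L * C * (x+y)^(n+1) / (n+1) := by ring
        _ = M * (2*L)^(n+1) * (x+y)^(n+1) / (n+1).factorial := by
            rw [hC]
            have : ((n+1).factorial : ℝ) = ((n:ℝ)+1) * n.factorial := by
              push_cast [Nat.factorial_succ]; ring
            rw [this]
            field_simp
            ring
  -- conclude
  intro x hx y hy
  have hw0 : w x y ≤ 0 := by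
    have hc0 : 0 ≤ 2*L*(x+y) := by
      have := hx.1; have := hy.1; positivity
    have htend : Filter.Tendsto (fun n : ℕ => M * ((2*L*(x+y))^n / n.factorial))
        Filter.atTop (nhds 0) := by
      simpa using (FloorSemiring.tendsto_pow_div_factorial_atTop (2*L*(x+y))).const_mul M
    apply ge_of_tendsto' htend
    intro n
    calc w x y ≤ M * (2*L)^n * (x+y)^n / n.factorial := hiter n x hx y hy
      _ = M * ((2*L*(x+y))^n / n.factorial) := by
          rw [show (2*L*(x+y))^n = (2*L)^n * (x+y)^n from mul_pow _ _ _]; ring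
  have hw0' : w x y = 0 := le_antisymm hw0 (hwnn x y)
  have hsplit := (add_eq_zero_iff_of_nonneg (norm_nonneg _) (norm_nonneg _)).mp hw0'
  exact ⟨sub_eq_zero.mp (norm_eq_zero.mp hsplit.1),
    sub_eq_zero.mp (norm_eq_zero.mp hsplit.2)⟩
end

section
/- Let f, g : 𝒳 × 𝒳 → 𝒳 be globally Lipschitz and bounded on bounded sets, and let a₀, b₀ : [0,r] → 𝒳 be continuous. Then the Goursat problem ∂_y a = f(a,b), ∂_x b = g(a,b) on [0,r]² with a(x,0) = a₀(x), b(0,y) = b₀(y) possesses a unique classical solution (a,b), i.e., continuous functions differentiable in the relevant variable satisfying the equations pointwise and the initial conditions. -/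
set_option linter.unusedSectionVars false
set_option maxHeartbeats 1000000

open Set MeasureTheory intervalIntegral

namespace GoursatAux

/-- `∫ η in 0..y, exp (K*η) = (exp (K*y) - 1) / K`. -/
lemma integral_exp_mul (K : ℝ) (hK : 0 < K) (y : ℝ) :
    ∫ η in (0:ℝ)..y, Real.exp (K * η) = (Real.exp (K * y) - 1) / K := by
  have h : ∀ η : ℝ, HasDerivAt (fun t => Real.exp (K * t) / K) (Real.exp (K * η)) η := by
    intro η
    have h1 : HasDerivAt (fun t : ℝ => K * t) K η := by
      simpa using (hasDerivAt_id η).const_mul K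
    have h2 := h1.exp
    have h3 := h2.div_const K
    simpa [mul_div_assoc, mul_div_cancel_left₀, hK.ne'] using h3
  have := intervalIntegral.integral_eq_sub_of_hasDerivAt (fun η _ => h η)
    ((Real.continuous_exp.comp (continuous_const.mul continuous_id)).intervalIntegrable 0 y)
  rw [this]
  simp [sub_div]

variable {X : Type*} [NormedAddCommGroup X] [NormedSpace ℝ X] [CompleteSpace X]

variable (r : ℝ) (hr : 0 < r) (f g : X × X → X) (a₀ b₀ : ℝ → X)

/-- The Picard-type integral operator for the Goursat problem. -/
noncomputable def Tmap (hf : Continuous f) (hg : Continuous g)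
    (ha₀ : ContinuousOn a₀ (Icc 0 r)) (hb₀ : ContinuousOn b₀ (Icc 0 r))
    (u : C(Icc (0:ℝ) r × Icc (0:ℝ) r, X × X)) :
    C(Icc (0:ℝ) r × Icc (0:ℝ) r, X × X) where
  toFun p := (a₀ p.1 + ∫ η in (0:ℝ)..(p.2:ℝ), f (u (p.1, projIcc 0 r hr.le η)),
              b₀ p.2 + ∫ ξ in (0:ℝ)..(p.1:ℝ), g (u (projIcc 0 r hr.le ξ, p.2)))
  continuous_toFun := by
    apply Continuous.prodMk
    · apply Continuous.add
      · exact ha₀.comp_continuous (continuous_subtype_val.comp continuous_fst) fun p => p.1.2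
      · have hc : Continuous (Function.uncurry fun (p : Icc (0:ℝ) r × Icc (0:ℝ) r) (t : ℝ) =>
            f (u (p.1, projIcc 0 r hr.le t))) :=
          hf.comp (u.continuous.comp
            ((continuous_fst.fst).prodMk (continuous_projIcc.comp continuous_snd)))
        exact intervalIntegral.continuous_parametric_intervalIntegral_of_continuous hc
          (continuous_subtype_val.comp continuous_snd)
    · apply Continuous.add
      · exact hb₀.comp_continuous (continuous_subtype_val.comp continuous_snd) fun p => p.2.2
      · have hc : Continuous (Function.uncurry fun (p : Icc (0:ℝ) r × Icc (0:ℝ) r) (t : ℝ) =>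
            g (u (projIcc 0 r hr.le t, p.2))) :=
          hg.comp (u.continuous.comp
            ((continuous_projIcc.comp continuous_snd).prodMk (continuous_fst.snd)))
        exact intervalIntegral.continuous_parametric_intervalIntegral_of_continuous hc
          (continuous_subtype_val.comp continuous_fst)


/-- Pointwise estimate for one component of the integral operator. -/
lemma norm_integral_est (L : NNReal) (K : ℝ) (hK : 0 < K) (D : ℝ) (hD : 0 ≤ D)
    (x y : ℝ) (hy : 0 ≤ y)
    (F₁ F₂ : ℝ → X) (h₁ : Continuous F₁) (h₂ : Continuous F₂)
    (hb : ∀ η ∈ Icc 0 y, ‖F₁ η - F₂ η‖ ≤ (L:ℝ) * D * (Real.exp (K*x) * Real.exp (K*η))) :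
    ‖(∫ η in (0:ℝ)..y, F₁ η) - ∫ η in (0:ℝ)..y, F₂ η‖
      ≤ (L:ℝ)/K * Real.exp (K*(x+y)) * D := by
  rw [← intervalIntegral.integral_sub (h₁.intervalIntegrable 0 y) (h₂.intervalIntegrable 0 y)]
  have step1 : ‖∫ η in (0:ℝ)..y, (F₁ η - F₂ η)‖ ≤ ∫ η in (0:ℝ)..y, ‖F₁ η - F₂ η‖ :=
    intervalIntegral.norm_integral_le_integral_norm hy
  have step2 : (∫ η in (0:ℝ)..y, ‖F₁ η - F₂ η‖)
      ≤ ∫ η in (0:ℝ)..y, (L:ℝ) * D * (Real.exp (K*x) * Real.exp (K*η)) := by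
    apply intervalIntegral.integral_mono_on hy
    · exact ((h₁.sub h₂).norm).intervalIntegrable 0 y
    · exact (Continuous.intervalIntegrable (by fun_prop) 0 y)
    · exact hb
  have step3 : (∫ η in (0:ℝ)..y, (L:ℝ) * D * (Real.exp (K*x) * Real.exp (K*η)))
      = (L:ℝ) * D * Real.exp (K*x) * ((Real.exp (K*y) - 1)/K) := by
    rw [show (fun η => (L:ℝ) * D * (Real.exp (K*x) * Real.exp (K*η)))
        = (fun η => ((L:ℝ) * D * Real.exp (K*x)) * Real.exp (K*η)) from by funext η; ring,
      intervalIntegral.integral_const_mul, integral_exp_mul K hK y]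
  have step4 : (L:ℝ) * D * Real.exp (K*x) * ((Real.exp (K*y) - 1)/K)
      ≤ (L:ℝ)/K * Real.exp (K*(x+y)) * D := by
    have e1 : Real.exp (K*(x+y)) = Real.exp (K*x) * Real.exp (K*y) := by
      rw [mul_add, Real.exp_add]
    have h2 : (Real.exp (K*y) - 1)/K ≤ Real.exp (K*y)/K := by
      gcongr
      linarith
    calc (L:ℝ) * D * Real.exp (K*x) * ((Real.exp (K*y) - 1)/K)
        ≤ (L:ℝ) * D * Real.exp (K*x) * (Real.exp (K*y)/K) := by
          apply mul_le_mul_of_nonneg_left h2; positivity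
      _ = (L:ℝ)/K * Real.exp (K*(x+y)) * D := by rw [e1]; ring
  calc ‖∫ η in (0:ℝ)..y, (F₁ η - F₂ η)‖ ≤ _ := step1
    _ ≤ _ := step2
    _ = _ := step3
    _ ≤ _ := step4


/-- The weighting map. -/
noncomputable def emap (K : ℝ) (u : C(Icc (0:ℝ) r × Icc (0:ℝ) r, X × X)) :
    C(Icc (0:ℝ) r × Icc (0:ℝ) r, X × X) :=
  ⟨fun p => Real.exp (-(K * ((p.1:ℝ) + (p.2:ℝ)))) • u p, by fun_prop⟩

noncomputable def emap' (K : ℝ) (v : C(Icc (0:ℝ) r × Icc (0:ℝ) r, X × X)) :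
    C(Icc (0:ℝ) r × Icc (0:ℝ) r, X × X) :=
  ⟨fun p => Real.exp (K * ((p.1:ℝ) + (p.2:ℝ))) • v p, by fun_prop⟩

lemma emap_emap' (K : ℝ) (v : C(Icc (0:ℝ) r × Icc (0:ℝ) r, X × X)) :
    emap r K (emap' r K v) = v := by
  apply ContinuousMap.ext; intro p
  show Real.exp (-(K * ((p.1:ℝ) + (p.2:ℝ)))) •
      (Real.exp (K * ((p.1:ℝ) + (p.2:ℝ))) • v p) = v p
  rw [smul_smul, Real.exp_neg, inv_mul_cancel₀ (Real.exp_ne_zero _), one_smul]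

lemma emap'_emap (K : ℝ) (u : C(Icc (0:ℝ) r × Icc (0:ℝ) r, X × X)) :
    emap' r K (emap r K u) = u := by
  apply ContinuousMap.ext; intro p
  show Real.exp (K * ((p.1:ℝ) + (p.2:ℝ))) •
      (Real.exp (-(K * ((p.1:ℝ) + (p.2:ℝ)))) • u p) = u p
  rw [smul_smul, Real.exp_neg, mul_inv_cancel₀ (Real.exp_ne_zero _), one_smul]


lemma exists_unique_fixed (L : NNReal) (hfL : LipschitzWith L f) (hgL : LipschitzWith L g)
    (ha₀ : ContinuousOn a₀ (Icc 0 r)) (hb₀ : ContinuousOn b₀ (Icc 0 r)) :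
    ∃! u : C(Icc (0:ℝ) r × Icc (0:ℝ) r, X × X),
      Tmap r hr f g a₀ b₀ hfL.continuous hgL.continuous ha₀ hb₀ u = u := by
  set K : ℝ := (L:ℝ) + 1 with hKdef
  have hK : 0 < K := by positivity
  set c : NNReal := L / (L + 1) with hcdef
  have hc1 : c < 1 := by
    rw [hcdef, div_lt_one (by positivity)]
    exact lt_add_one L
  have hcc : (c:ℝ) = (L:ℝ)/K := by
    rw [hcdef, hKdef]; push_cast; ring
  set T := Tmap r hr f g a₀ b₀ hfL.continuous hgL.continuous ha₀ hb₀ with hTdef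
  set S : C(Icc (0:ℝ) r × Icc (0:ℝ) r, X × X) → C(Icc (0:ℝ) r × Icc (0:ℝ) r, X × X) :=
    fun v => emap r K (T (emap' r K v)) with hSdef
  have est : ∀ v₁ v₂, dist (S v₁) (S v₂) ≤ (c:ℝ) * dist v₁ v₂ := by
    intro v₁ v₂
    set u₁ := emap' r K v₁ with hu₁
    set u₂ := emap' r K v₂ with hu₂
    set D := dist v₁ v₂ with hDdef
    have hD0 : (0:ℝ) ≤ D := dist_nonneg
    rw [ContinuousMap.dist_le (by positivity)]
    intro p
    have hdistu : ∀ q : Icc (0:ℝ) r × Icc (0:ℝ) r,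
        dist (u₁ q) (u₂ q) ≤ Real.exp (K*((q.1:ℝ)+(q.2:ℝ))) * D := by
      intro q
      show dist (Real.exp (K*((q.1:ℝ)+(q.2:ℝ))) • v₁ q)
        (Real.exp (K*((q.1:ℝ)+(q.2:ℝ))) • v₂ q) ≤ _
      rw [dist_smul₀, Real.norm_eq_abs, Real.abs_exp]
      exact mul_le_mul_of_nonneg_left (ContinuousMap.dist_apply_le_dist q) (Real.exp_pos _).le
    have h1 : dist ((T u₁ p).1) ((T u₂ p).1)
        ≤ (L:ℝ)/K * Real.exp (K*((p.1:ℝ)+(p.2:ℝ))) * D := by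
      show dist (a₀ p.1 + ∫ η in (0:ℝ)..(p.2:ℝ), f (u₁ (p.1, projIcc 0 r hr.le η)))
        (a₀ p.1 + ∫ η in (0:ℝ)..(p.2:ℝ), f (u₂ (p.1, projIcc 0 r hr.le η))) ≤ _
      rw [dist_add_left, dist_eq_norm]
      apply norm_integral_est L K hK D hD0 (p.1:ℝ) (p.2:ℝ) p.2.2.1
      · exact hfL.continuous.comp (u₁.continuous.comp
          (continuous_const.prodMk continuous_projIcc))
      · exact hfL.continuous.comp (u₂.continuous.comp
          (continuous_const.prodMk continuous_projIcc))
      · intro η hη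
        have hηr : η ∈ Icc (0:ℝ) r := ⟨hη.1, hη.2.trans p.2.2.2⟩
        rw [← dist_eq_norm]
        calc dist (f (u₁ (p.1, projIcc 0 r hr.le η))) (f (u₂ (p.1, projIcc 0 r hr.le η)))
            ≤ (L:ℝ) * dist (u₁ (p.1, projIcc 0 r hr.le η)) (u₂ (p.1, projIcc 0 r hr.le η)) :=
              hfL.dist_le_mul _ _
          _ ≤ (L:ℝ) * (Real.exp (K*((p.1:ℝ)+((projIcc 0 r hr.le η : Icc (0:ℝ) r):ℝ))) * D) :=
              mul_le_mul_of_nonneg_left (hdistu _) L.coe_nonneg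
          _ = (L:ℝ) * D * (Real.exp (K*(p.1:ℝ)) * Real.exp (K*η)) := by
              rw [projIcc_of_mem hr.le hηr]
              show (L:ℝ) * (Real.exp (K*((p.1:ℝ)+η)) * D) = _
              rw [mul_add, Real.exp_add]; ring
    have h2 : dist ((T u₁ p).2) ((T u₂ p).2)
        ≤ (L:ℝ)/K * Real.exp (K*((p.1:ℝ)+(p.2:ℝ))) * D := by
      show dist (b₀ p.2 + ∫ ξ in (0:ℝ)..(p.1:ℝ), g (u₁ (projIcc 0 r hr.le ξ, p.2)))
        (b₀ p.2 + ∫ ξ in (0:ℝ)..(p.1:ℝ), g (u₂ (projIcc 0 r hr.le ξ, p.2))) ≤ _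
      rw [dist_add_left, dist_eq_norm]
      have := norm_integral_est L K hK D hD0 (p.2:ℝ) (p.1:ℝ) p.1.2.1
        (F₁ := fun ξ => g (u₁ (projIcc 0 r hr.le ξ, p.2)))
        (F₂ := fun ξ => g (u₂ (projIcc 0 r hr.le ξ, p.2)))
        (hgL.continuous.comp (u₁.continuous.comp
          (continuous_projIcc.prodMk continuous_const)))
        (hgL.continuous.comp (u₂.continuous.comp
          (continuous_projIcc.prodMk continuous_const)))
        ?_
      · rw [show K*((p.2:ℝ)+(p.1:ℝ)) = K*((p.1:ℝ)+(p.2:ℝ)) from by ring] at this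
        exact this
      · intro ξ hξ
        have hξr : ξ ∈ Icc (0:ℝ) r := ⟨hξ.1, hξ.2.trans p.1.2.2⟩
        rw [← dist_eq_norm]
        calc dist (g (u₁ (projIcc 0 r hr.le ξ, p.2))) (g (u₂ (projIcc 0 r hr.le ξ, p.2)))
            ≤ (L:ℝ) * dist (u₁ (projIcc 0 r hr.le ξ, p.2)) (u₂ (projIcc 0 r hr.le ξ, p.2)) :=
              hgL.dist_le_mul _ _
          _ ≤ (L:ℝ) * (Real.exp (K*(((projIcc 0 r hr.le ξ : Icc (0:ℝ) r):ℝ)+(p.2:ℝ))) * D) :=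
              mul_le_mul_of_nonneg_left (hdistu _) L.coe_nonneg
          _ = (L:ℝ) * D * (Real.exp (K*(p.2:ℝ)) * Real.exp (K*ξ)) := by
              rw [projIcc_of_mem hr.le hξr]
              show (L:ℝ) * (Real.exp (K*(ξ+(p.2:ℝ))) * D) = _
              rw [mul_add, Real.exp_add]; ring
    have hTd : dist (T u₁ p) (T u₂ p) ≤ (L:ℝ)/K * Real.exp (K*((p.1:ℝ)+(p.2:ℝ))) * D := by
      rw [Prod.dist_eq]; exact max_le h1 h2
    calc dist (S v₁ p) (S v₂ p)
        = Real.exp (-(K*((p.1:ℝ)+(p.2:ℝ)))) * dist (T u₁ p) (T u₂ p) := by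
          show dist (Real.exp (-(K*((p.1:ℝ)+(p.2:ℝ)))) • T u₁ p)
            (Real.exp (-(K*((p.1:ℝ)+(p.2:ℝ)))) • T u₂ p) = _
          rw [dist_smul₀, Real.norm_eq_abs, Real.abs_exp]
      _ ≤ Real.exp (-(K*((p.1:ℝ)+(p.2:ℝ)))) *
          ((L:ℝ)/K * Real.exp (K*((p.1:ℝ)+(p.2:ℝ))) * D) :=
          mul_le_mul_of_nonneg_left hTd (Real.exp_pos _).le
      _ = (L:ℝ)/K * D := by
          rw [show Real.exp (-(K*((p.1:ℝ)+(p.2:ℝ)))) *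
              ((L:ℝ)/K * Real.exp (K*((p.1:ℝ)+(p.2:ℝ))) * D)
            = (L:ℝ)/K * D * (Real.exp (-(K*((p.1:ℝ)+(p.2:ℝ)))) *
              Real.exp (K*((p.1:ℝ)+(p.2:ℝ)))) from by ring,
            ← Real.exp_add, neg_add_cancel, Real.exp_zero, mul_one]
      _ = (c:ℝ) * D := by rw [hcc]
  have hS : ContractingWith c S := ⟨hc1, LipschitzWith.of_dist_le_mul est⟩
  haveI : Nonempty (C(Icc (0:ℝ) r × Icc (0:ℝ) r, X × X)) := ⟨0⟩
  set v := ContractingWith.fixedPoint S hS with hvdef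
  have hv : S v = v := hS.fixedPoint_isFixedPt
  refine ⟨emap' r K v, ?_, ?_⟩
  · have h : emap r K (T (emap' r K v)) = emap r K (emap' r K v) := by
      rw [emap_emap']; exact hv
    have := congrArg (emap' r K) h
    rwa [emap'_emap, emap_emap'] at this
  · intro u' hu'
    have hfix : S (emap r K u') = emap r K u' := by
      show emap r K (T (emap' r K (emap r K u'))) = emap r K u'
      rw [emap'_emap, hu']
    have : emap r K u' = v := hS.fixedPoint_unique hfix
    calc u' = emap' r K (emap r K u') := (emap'_emap r K u').symm
      _ = emap' r K v := by rw [this]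

end GoursatAux


open Set MeasureTheory intervalIntegral GoursatAux

/-- The property of being a classical solution of the Goursat problem
`∂_y a = f(a,b)`, `∂_x b = g(a,b)` on `[0,r]²` with data `a(·,0) = a₀`, `b(0,·) = b₀`. -/
def IsGoursatSolution {X : Type*} [NormedAddCommGroup X] [NormedSpace ℝ X]
    (r : ℝ) (f g : X × X → X) (a₀ b₀ : ℝ → X) (a b : ℝ → ℝ → X) : Prop :=
  ContinuousOn (fun p : ℝ × ℝ => a p.1 p.2) (Set.Icc 0 r ×ˢ Set.Icc 0 r) ∧
  ContinuousOn (fun p : ℝ × ℝ => b p.1 p.2) (Set.Icc 0 r ×ˢ Set.Icc 0 r) ∧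
  (∀ x ∈ Set.Icc (0:ℝ) r, ∀ y ∈ Set.Icc (0:ℝ) r,
    HasDerivWithinAt (fun t => a x t) (f (a x y, b x y)) (Set.Icc 0 r) y) ∧
  (∀ x ∈ Set.Icc (0:ℝ) r, ∀ y ∈ Set.Icc (0:ℝ) r,
    HasDerivWithinAt (fun s => b s y) (g (a x y, b x y)) (Set.Icc 0 r) x) ∧
  (∀ x ∈ Set.Icc (0:ℝ) r, a x 0 = a₀ x) ∧
  (∀ y ∈ Set.Icc (0:ℝ) r, b 0 y = b₀ y)

/-- Existence and uniqueness of the classical solution of the continuous Goursat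
problem for globally Lipschitz right-hand sides which are bounded on bounded sets. -/
theorem stmt8 {X : Type*} [NormedAddCommGroup X] [NormedSpace ℝ X] [CompleteSpace X]
    (r : ℝ) (hr : 0 < r) (f g : X × X → X) (L : NNReal)
    (hf : LipschitzWith L f) (hg : LipschitzWith L g)
    (hfb : ∀ s : Set (X × X), Bornology.IsBounded s → Bornology.IsBounded (f '' s))
    (hgb : ∀ s : Set (X × X), Bornology.IsBounded s → Bornology.IsBounded (g '' s))
    (a₀ b₀ : ℝ → X)
    (ha₀ : ContinuousOn a₀ (Set.Icc 0 r)) (hb₀ : ContinuousOn b₀ (Set.Icc 0 r)) :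
    ∃ a b : ℝ → ℝ → X, IsGoursatSolution r f g a₀ b₀ a b ∧
      ∀ a' b' : ℝ → ℝ → X, IsGoursatSolution r f g a₀ b₀ a' b' →
        ∀ x ∈ Set.Icc (0:ℝ) r, ∀ y ∈ Set.Icc (0:ℝ) r,
          a' x y = a x y ∧ b' x y = b x y := by
  obtain ⟨u, hu, huniq⟩ := exists_unique_fixed r hr f g a₀ b₀ L hf hg ha₀ hb₀
  set pj : ℝ → Icc (0:ℝ) r := Set.projIcc 0 r hr.le with hpjdef
  have hueq : ∀ p : Icc (0:ℝ) r × Icc (0:ℝ) r,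
      u p = (a₀ p.1 + ∫ η in (0:ℝ)..(p.2:ℝ), f (u (p.1, pj η)),
             b₀ p.2 + ∫ ξ in (0:ℝ)..(p.1:ℝ), g (u (pj ξ, p.2))) :=
    fun p => (ContinuousMap.congr_fun hu p).symm
  have hcu : Continuous fun p : ℝ × ℝ => u (pj p.1, pj p.2) :=
    u.continuous.comp ((continuous_projIcc.comp continuous_fst).prodMk
      (continuous_projIcc.comp continuous_snd))
  refine ⟨fun x y => (u (pj x, pj y)).1, fun x y => (u (pj x, pj y)).2,
    ⟨(continuous_fst.comp hcu).continuousOn, (continuous_snd.comp hcu).continuousOn,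
      ?_, ?_, ?_, ?_⟩, ?_⟩
  · -- y-derivative of a
    intro x hx y hy
    have hpx : pj x = ⟨x, hx⟩ := projIcc_of_mem hr.le hx
    have hpy : pj y = ⟨y, hy⟩ := projIcc_of_mem hr.le hy
    set h : ℝ → X := fun t => f (u (⟨x, hx⟩, pj t)) with hhdef
    have hch : Continuous h := hf.continuous.comp (u.continuous.comp
      (continuous_const.prodMk continuous_projIcc))
    have hG : HasDerivAt (fun t => a₀ x + ∫ η in (0:ℝ)..t, h η) (h y) y :=
      (intervalIntegral.integral_hasDerivAt_right (hch.intervalIntegrable 0 y)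
        hch.stronglyMeasurable.stronglyMeasurableAtFilter
        hch.continuousAt).const_add (a₀ x)
    have hval : h y = f ((u (pj x, pj y)).1, (u (pj x, pj y)).2) := by
      rw [hhdef]; simp only [hpx, hpy]
    rw [← hval]
    apply hG.hasDerivWithinAt.congr
    · intro t ht
      have hpt : pj t = ⟨t, ht⟩ := projIcc_of_mem hr.le ht
      show (u (pj x, pj t)).1 = a₀ x + ∫ η in (0:ℝ)..t, h η
      rw [hpx, hpt]
      exact congrArg Prod.fst (hueq (⟨x, hx⟩, ⟨t, ht⟩))
    · show (u (pj x, pj y)).1 = a₀ x + ∫ η in (0:ℝ)..y, h η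
      rw [hpx, hpy]
      exact congrArg Prod.fst (hueq (⟨x, hx⟩, ⟨y, hy⟩))
  · -- x-derivative of b
    intro x hx y hy
    have hpx : pj x = ⟨x, hx⟩ := projIcc_of_mem hr.le hx
    have hpy : pj y = ⟨y, hy⟩ := projIcc_of_mem hr.le hy
    set h : ℝ → X := fun t => g (u (pj t, ⟨y, hy⟩)) with hhdef
    have hch : Continuous h := hg.continuous.comp (u.continuous.comp
      (continuous_projIcc.prodMk continuous_const))
    have hG : HasDerivAt (fun t => b₀ y + ∫ ξ in (0:ℝ)..t, h ξ) (h x) x :=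
      (intervalIntegral.integral_hasDerivAt_right (hch.intervalIntegrable 0 x)
        hch.stronglyMeasurable.stronglyMeasurableAtFilter
        hch.continuousAt).const_add (b₀ y)
    have hval : h x = g ((u (pj x, pj y)).1, (u (pj x, pj y)).2) := by
      rw [hhdef]; simp only [hpx, hpy]
    rw [← hval]
    apply hG.hasDerivWithinAt.congr
    · intro t ht
      have hpt : pj t = ⟨t, ht⟩ := projIcc_of_mem hr.le ht
      show (u (pj t, pj y)).2 = b₀ y + ∫ ξ in (0:ℝ)..t, h ξ
      rw [hpy, hpt]
      exact congrArg Prod.snd (hueq (⟨t, ht⟩, ⟨y, hy⟩))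
    · show (u (pj x, pj y)).2 = b₀ y + ∫ ξ in (0:ℝ)..x, h ξ
      rw [hpx, hpy]
      exact congrArg Prod.snd (hueq (⟨x, hx⟩, ⟨y, hy⟩))
  · -- initial condition for a
    intro x hx
    have hpx : pj x = ⟨x, hx⟩ := projIcc_of_mem hr.le hx
    have hp0 : pj 0 = ⟨0, by exact ⟨le_refl _, hr.le⟩⟩ :=
      projIcc_of_mem hr.le ⟨le_refl _, hr.le⟩
    show (u (pj x, pj 0)).1 = a₀ x
    have := congrArg Prod.fst (hueq (pj x, pj 0))
    rw [hp0] at this ⊢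
    rw [hpx] at this ⊢
    simpa using this
  · -- initial condition for b
    intro y hy
    have hpy : pj y = ⟨y, hy⟩ := projIcc_of_mem hr.le hy
    have hp0 : pj 0 = ⟨0, by exact ⟨le_refl _, hr.le⟩⟩ :=
      projIcc_of_mem hr.le ⟨le_refl _, hr.le⟩
    show (u (pj 0, pj y)).2 = b₀ y
    have := congrArg Prod.snd (hueq (pj 0, pj y))
    rw [hp0] at this ⊢
    rw [hpy] at this ⊢
    simpa using this
  · -- uniqueness
    rintro a' b' ⟨hca, hcb, hda, hdb, hia, hib⟩
    have hcu' : Continuous fun q : Icc (0:ℝ) r × Icc (0:ℝ) r => (a' q.1 q.2, b' q.1 q.2) := by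
      apply Continuous.prodMk
      · exact hca.comp_continuous
          (continuous_subtype_val.prodMap continuous_subtype_val)
          (fun q => Set.mk_mem_prod q.1.2 q.2.2)
      · exact hcb.comp_continuous
          (continuous_subtype_val.prodMap continuous_subtype_val)
          (fun q => Set.mk_mem_prod q.1.2 q.2.2)
    set u' : C(Icc (0:ℝ) r × Icc (0:ℝ) r, X × X) := ⟨_, hcu'⟩ with hu'def
    have hfix : Tmap r hr f g a₀ b₀ hf.continuous hg.continuous ha₀ hb₀ u' = u' := by
      apply ContinuousMap.ext
      rintro ⟨qx, qy⟩
      have hconta : ContinuousOn (fun t => a' qx t) (Icc 0 (qy:ℝ)) :=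
        ContinuousOn.comp (f := fun t : ℝ => ((qx:ℝ), t)) hca
          (Continuous.continuousOn (by fun_prop))
          (fun t ht => Set.mk_mem_prod qx.2 ⟨ht.1, ht.2.trans qy.2.2⟩)
      have hcontb : ContinuousOn (fun t => b' t qy) (Icc 0 (qx:ℝ)) :=
        ContinuousOn.comp (f := fun t : ℝ => (t, (qy:ℝ))) hcb
          (Continuous.continuousOn (by fun_prop))
          (fun t ht => Set.mk_mem_prod ⟨ht.1, ht.2.trans qx.2.2⟩ qy.2)
      have hcfa : ContinuousOn (fun t => f (a' qx t, b' qx t)) (Icc 0 (qy:ℝ)) := by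
        apply hf.continuous.comp_continuousOn
        exact ContinuousOn.prodMk hconta
          (ContinuousOn.comp (f := fun t : ℝ => ((qx:ℝ), t)) hcb
            (Continuous.continuousOn (by fun_prop))
            (fun t ht => Set.mk_mem_prod qx.2 ⟨ht.1, ht.2.trans qy.2.2⟩))
      have hcgb : ContinuousOn (fun t => g (a' t qy, b' t qy)) (Icc 0 (qx:ℝ)) := by
        apply hg.continuous.comp_continuousOn
        exact ContinuousOn.prodMk
          (ContinuousOn.comp (f := fun t : ℝ => (t, (qy:ℝ))) hca
            (Continuous.continuousOn (by fun_prop))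
            (fun t ht => Set.mk_mem_prod ⟨ht.1, ht.2.trans qx.2.2⟩ qy.2))
          hcontb
      have key1 : (∫ η in (0:ℝ)..(qy:ℝ), f (a' qx η, b' qx η)) = a' qx qy - a' qx 0 := by
        apply intervalIntegral.integral_eq_sub_of_hasDeriv_right_of_le qy.2.1 hconta
        · intro t ht
          have htr : (t:ℝ) ∈ Icc (0:ℝ) r := ⟨ht.1.le, ht.2.le.trans qy.2.2⟩
          have hd := hda qx qx.2 t htr
          have hnb : Icc (0:ℝ) r ∈ nhds t := Icc_mem_nhds ht.1 (lt_of_lt_of_le ht.2 qy.2.2)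
          exact (hd.hasDerivAt hnb).hasDerivWithinAt
        · rw [intervalIntegrable_iff_integrableOn_Icc_of_le qy.2.1]
          exact hcfa.integrableOn_compact isCompact_Icc
      have key2 : (∫ ξ in (0:ℝ)..(qx:ℝ), g (a' ξ qy, b' ξ qy)) = b' qx qy - b' 0 qy := by
        apply intervalIntegral.integral_eq_sub_of_hasDeriv_right_of_le qx.2.1 hcontb
        · intro t ht
          have htr : (t:ℝ) ∈ Icc (0:ℝ) r := ⟨ht.1.le, ht.2.le.trans qx.2.2⟩
          have hd := hdb t htr qy qy.2
          have hnb : Icc (0:ℝ) r ∈ nhds t := Icc_mem_nhds ht.1 (lt_of_lt_of_le ht.2 qx.2.2)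
          exact (hd.hasDerivAt hnb).hasDerivWithinAt
        · rw [intervalIntegrable_iff_integrableOn_Icc_of_le qx.2.1]
          exact hcgb.integrableOn_compact isCompact_Icc
      have cong1 : (∫ η in (0:ℝ)..(qy:ℝ), f (u' (qx, pj η)))
          = ∫ η in (0:ℝ)..(qy:ℝ), f (a' qx η, b' qx η) := by
        apply intervalIntegral.integral_congr
        intro η hη
        rw [uIcc_of_le qy.2.1] at hη
        have hηr : η ∈ Icc (0:ℝ) r := ⟨hη.1, hη.2.trans qy.2.2⟩
        have hpη : pj η = ⟨η, hηr⟩ := projIcc_of_mem hr.le hηr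
        show f (u' (qx, pj η)) = f (a' qx η, b' qx η)
        rw [hpη]
        rfl
      have cong2 : (∫ ξ in (0:ℝ)..(qx:ℝ), g (u' (pj ξ, qy)))
          = ∫ ξ in (0:ℝ)..(qx:ℝ), g (a' ξ qy, b' ξ qy) := by
        apply intervalIntegral.integral_congr
        intro ξ hξ
        rw [uIcc_of_le qx.2.1] at hξ
        have hξr : ξ ∈ Icc (0:ℝ) r := ⟨hξ.1, hξ.2.trans qx.2.2⟩
        have hpξ : pj ξ = ⟨ξ, hξr⟩ := projIcc_of_mem hr.le hξr
        show g (u' (pj ξ, qy)) = g (a' ξ qy, b' ξ qy)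
        rw [hpξ]
        rfl
      show (a₀ qx + ∫ η in (0:ℝ)..(qy:ℝ), f (u' (qx, pj η)),
            b₀ qy + ∫ ξ in (0:ℝ)..(qx:ℝ), g (u' (pj ξ, qy))) = (a' qx qy, b' qx qy)
      rw [cong1, cong2, key1, key2, hia qx qx.2, hib qy qy.2, Prod.mk.injEq]
      exact ⟨by abel, by abel⟩
    have hequ : u' = u := huniq u' hfix
    intro x hx y hy
    have hpx : pj x = ⟨x, hx⟩ := projIcc_of_mem hr.le hx
    have hpy : pj y = ⟨y, hy⟩ := projIcc_of_mem hr.le hy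
    constructor
    · show a' x y = (u (pj x, pj y)).1
      rw [hpx, hpy]
      exact congrArg Prod.fst (ContinuousMap.congr_fun hequ (⟨x, hx⟩, ⟨y, hy⟩))
    · show b' x y = (u (pj x, pj y)).2
      rw [hpx, hpy]
      exact congrArg Prod.snd (ContinuousMap.congr_fun hequ (⟨x, hx⟩, ⟨y, hy⟩))
end

section
/- Define θ = (φ̃ − φ)/2, a = ∂_x φ, b = φ. The pair of ordinary differential equations ∂_x θ = −a + α·sin θ, ∂_y θ = (1/α)·sin(b + θ) is compatible along solutions of the Sine-Gordon system ∂_y a = sin b, ∂_x b = a: that is, if a, b are C¹ functions satisfying ∂_y a = sin b and ∂_x b = a, and θ is C² satisfying both equations, then ∂_y(−a + α sin θ) = ∂_x((1/α)sin(b+θ)) holds identically; equivalently, ∂_y(∂_x θ) = ∂_x(∂_y θ) is an identity given the three first-order systems. -/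
/-- Compatibility of the Bäcklund system for the Sine-Gordon equation: along solutions of
`∂_y a = sin b`, `∂_x b = a`, the two equations `∂_x θ = −a + α sin θ`,
`∂_y θ = (1/α) sin(b + θ)` are compatible, i.e.
`∂_y(−a + α sin θ) = ∂_x((1/α) sin(b + θ))`, equivalently `∂_y ∂_x θ = ∂_x ∂_y θ`. -/
theorem stmt13 (α : ℝ) (hα : α ≠ 0) (a b θ : ℝ → ℝ → ℝ)
    (ha : ∀ x y : ℝ, HasDerivAt (fun t => a x t) (Real.sin (b x y)) y)
    (hb : ∀ x y : ℝ, HasDerivAt (fun s => b s y) (a x y) x)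
    (hθx : ∀ x y : ℝ, HasDerivAt (fun s => θ s y) (-a x y + α * Real.sin (θ x y)) x)
    (hθy : ∀ x y : ℝ, HasDerivAt (fun t => θ x t) ((1 / α) * Real.sin (b x y + θ x y)) y) :
    ∀ x y : ℝ,
      deriv (fun t => -a x t + α * Real.sin (θ x t)) y =
      deriv (fun s => (1 / α) * Real.sin (b s y + θ s y)) x := by
  intro x y
  have hL : HasDerivAt (fun t => -a x t + α * Real.sin (θ x t))
      (-Real.sin (b x y) + α * (Real.cos (θ x y) * ((1 / α) * Real.sin (b x y + θ x y)))) y :=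
    ((ha x y).neg).add (((Real.hasDerivAt_sin (θ x y)).comp y (hθy x y)).const_mul α)
  have hR : HasDerivAt (fun s => (1 / α) * Real.sin (b s y + θ s y))
      ((1 / α) * (Real.cos (b x y + θ x y) * (a x y + (-a x y + α * Real.sin (θ x y))))) x :=
    (((Real.hasDerivAt_sin (b x y + θ x y)).comp x ((hb x y).add (hθx x y)))).const_mul (1 / α)
  rw [hL.deriv, hR.deriv]
  field_simp
  rw [Real.sin_add, Real.cos_add]
  linear_combination Real.sin (b x y) * α * (Real.sin_sq_add_cos_sq (θ x y))
end

section
/- Let (a,b) be a C¹ solution of ∂_y a = sin b, ∂_x b = a on [0,r]², and let θ be a C¹ solution of ∂_x θ = −a + α sin θ, ∂_y θ = (1/α) sin(b + θ). Then the functions ã := −a + 2α sin θ and b̃ := b + 2θ again solve ∂_y ã = sin b̃ and ∂_x b̃ = ã. -/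
/-- The Bäcklund transformation maps solutions of the Sine-Gordon system to solutions:
if `(a,b)` solves `∂_y a = sin b`, `∂_x b = a` on `[0,r]²` and `θ` solves
`∂_x θ = −a + α sin θ`, `∂_y θ = (1/α) sin(b + θ)`, then `ã = −a + 2α sin θ` and
`b̃ = b + 2θ` again satisfy `∂_y ã = sin b̃`, `∂_x b̃ = ã`. -/
theorem stmt14 (r α : ℝ) (hr : 0 < r) (hα : α ≠ 0) (a b θ : ℝ → ℝ → ℝ)
    (ha : ∀ x ∈ Set.Icc (0:ℝ) r, ∀ y ∈ Set.Icc (0:ℝ) r,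
      HasDerivWithinAt (fun t => a x t) (Real.sin (b x y)) (Set.Icc 0 r) y)
    (hb : ∀ x ∈ Set.Icc (0:ℝ) r, ∀ y ∈ Set.Icc (0:ℝ) r,
      HasDerivWithinAt (fun s => b s y) (a x y) (Set.Icc 0 r) x)
    (hθx : ∀ x ∈ Set.Icc (0:ℝ) r, ∀ y ∈ Set.Icc (0:ℝ) r,
      HasDerivWithinAt (fun s => θ s y) (-a x y + α * Real.sin (θ x y)) (Set.Icc 0 r) x)
    (hθy : ∀ x ∈ Set.Icc (0:ℝ) r, ∀ y ∈ Set.Icc (0:ℝ) r,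
      HasDerivWithinAt (fun t => θ x t) ((1 / α) * Real.sin (b x y + θ x y)) (Set.Icc 0 r) y) :
    ∀ x ∈ Set.Icc (0:ℝ) r, ∀ y ∈ Set.Icc (0:ℝ) r,
      HasDerivWithinAt (fun t => -a x t + 2 * α * Real.sin (θ x t))
        (Real.sin (b x y + 2 * θ x y)) (Set.Icc 0 r) y ∧
      HasDerivWithinAt (fun s => b s y + 2 * θ s y)
        (-a x y + 2 * α * Real.sin (θ x y)) (Set.Icc 0 r) x := by
  intro x hx y hy
  constructor
  · have h1 := ((ha x hx y hy).neg).add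
      (((Real.hasDerivAt_sin (θ x y)).comp_hasDerivWithinAt y (hθy x hx y hy)).const_mul (2 * α))
    refine h1.congr_deriv ?_
    have hpyth := Real.sin_sq_add_cos_sq (θ x y)
    rw [Real.sin_add, Real.sin_add, Real.cos_two_mul, Real.sin_two_mul]
    field_simp
    nlinarith [hpyth]
  · have h2 := (hb x hx y hy).add ((hθx x hx y hy).const_mul 2)
    refine h2.congr_deriv ?_
    ring
end

section
/- Let 𝒰^ε(a;λ) = (1+ε²λ²/4)^{-1/2}·[[e^{iεa/2}, −iελ/2],[−iελ/2, e^{-iεa/2}]] and 𝒱^ε(b;λ) = (1+ε²λ^{-2}/4)^{-1/2}·[[1, (iελ^{-1}/2)e^{ib}],[(iελ^{-1}/2)e^{-ib}, 1]]. For real-valued lattice functions a, b on Ω^ε(r), the discrete zero curvature condition 𝒰^ε(a(x,y+ε);λ)·𝒱^ε(b(x,y);λ) = 𝒱^ε(b(x+ε,y);λ)·𝒰^ε(a(x,y);λ), required to hold identically in λ ≠ 0, is equivalent to the Hirota discretization of the Sine-Gordon equation: sin¼(φ(x+ε,y+ε) − φ(x+ε,y) − φ(x,y+ε) + φ(x,y))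 = (ε²/4)·sin¼(φ(x+ε,y+ε) + φ(x+ε,y) + φ(x,y+ε) + φ(x,y)), where a = δ_x^ε φ and b = φ + (ε/2)δ_y^ε φ. -/
set_option maxHeartbeats 1000000

/-- The matrix `𝒰^ε(a;λ) = (1+ε²λ²/4)^{-1/2}·[[e^{iεa/2}, −iελ/2],[−iελ/2, e^{-iεa/2}]]`. -/
noncomputable def hirU (ε a lam : ℝ) : Matrix (Fin 2) (Fin 2) ℂ :=
  ((Real.sqrt (1 + ε ^ 2 * lam ^ 2 / 4))⁻¹ : ℝ) •
    !![Complex.exp (Complex.I * ((ε * a / 2 : ℝ) : ℂ)), -(Complex.I * ((ε * lam / 2 : ℝ) : ℂ));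
       -(Complex.I * ((ε * lam / 2 : ℝ) : ℂ)), Complex.exp (-(Complex.I * ((ε * a / 2 : ℝ) : ℂ)))]

/-- The matrix `𝒱^ε(b;λ) = (1+ε²λ^{-2}/4)^{-1/2}·[[1, (iελ^{-1}/2)e^{ib}],[(iελ^{-1}/2)e^{-ib}, 1]]`. -/
noncomputable def hirV (ε b lam : ℝ) : Matrix (Fin 2) (Fin 2) ℂ :=
  ((Real.sqrt (1 + ε ^ 2 / (4 * lam ^ 2)))⁻¹ : ℝ) •
    !![1, Complex.I * ((ε / (2 * lam) : ℝ) : ℂ) * Complex.exp (Complex.I * ((b : ℝ) : ℂ));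
       Complex.I * ((ε / (2 * lam) : ℝ) : ℂ) * Complex.exp (-(Complex.I * ((b : ℝ) : ℂ))), 1]

lemma hir_exp_sub_exp (x : ℝ) :
    Complex.exp (Complex.I * x) - Complex.exp (-(Complex.I * x)) = 2 * Complex.I * Real.sin x := by
  rw [mul_comm Complex.I (x:ℂ), ← neg_mul, Complex.exp_mul_I, Complex.exp_mul_I,
    Complex.ofReal_sin]
  simp [Complex.cos_neg, Complex.sin_neg]
  ring

lemma hir_key (k S T : ℝ) :
    (Complex.exp (Complex.I * S) + (k:ℂ) * Complex.exp (-(Complex.I * T)) =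
      Complex.exp (-(Complex.I * S)) + (k:ℂ) * Complex.exp (Complex.I * T))
    ↔ Real.sin S = k * Real.sin T := by
  constructor
  · intro h
    have h2 : Complex.exp (Complex.I*S) - Complex.exp (-(Complex.I*S)) =
        (k:ℂ) * (Complex.exp (Complex.I*T) - Complex.exp (-(Complex.I*T))) := by
      linear_combination h
    rw [hir_exp_sub_exp, hir_exp_sub_exp] at h2
    have h3 : (2*Complex.I) * (Real.sin S : ℂ) = (2*Complex.I) * ((k : ℂ) * Real.sin T) := by
      linear_combination h2
    have h4 := mul_left_cancel₀ (by simp [Complex.I_ne_zero] : (2*Complex.I) ≠ 0) h3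
    exact_mod_cast h4
  · intro h
    have h' : (Real.sin S : ℂ) = (k:ℂ) * Real.sin T := by exact_mod_cast h
    linear_combination hir_exp_sub_exp S - (k:ℂ) * hir_exp_sub_exp T + (2*Complex.I) * h'

lemma hir_main (ε lam : ℝ) (hε : ε ≠ 0) (hlam : lam ≠ 0) (S T P : ℝ) :
    (hirU ε (2*(P+S)/ε) lam * hirV ε (T-P) lam = hirV ε (T+P) lam * hirU ε (2*(P-S)/ε) lam)
    ↔ (Complex.exp (Complex.I * ((S:ℂ))) + ((ε^2/4 : ℝ):ℂ) * Complex.exp (-(Complex.I * (T:ℂ))) =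
        Complex.exp (-(Complex.I * (S:ℂ))) + ((ε^2/4 : ℝ):ℂ) * Complex.exp (Complex.I * (T:ℂ))) := by
  have e1 : ε * (2*(P+S)/ε) / 2 = P + S := by field_simp
  have e2 : ε * (2*(P-S)/ε) / 2 = P - S := by field_simp
  have hc : (Real.sqrt (1 + ε ^ 2 * lam ^ 2 / 4))⁻¹ ≠ 0 := by positivity
  have hd : (Real.sqrt (1 + ε ^ 2 / (4 * lam ^ 2)))⁻¹ ≠ 0 := by
    have : (0:ℝ) < 1 + ε ^ 2 / (4 * lam ^ 2) := by positivity
    positivity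
  rw [hirU, hirU, hirV, hirV, e1, e2]
  rw [smul_mul_assoc, mul_smul_comm, smul_mul_assoc, mul_smul_comm, smul_smul, smul_smul,
    mul_comm ((Real.sqrt (1 + ε ^ 2 / (4 * lam ^ 2)))⁻¹)]
  rw [(smul_right_injective (Matrix (Fin 2) (Fin 2) ℂ) (mul_ne_zero hc hd)).eq_iff]
  rw [Matrix.mul_fin_two, Matrix.mul_fin_two, ← Matrix.ext_iff]
  push_cast
  simp only [Fin.forall_fin_two, Matrix.cons_val', Matrix.cons_val_zero, Matrix.cons_val_one,
    Matrix.head_cons, Matrix.empty_val', Matrix.cons_val_fin_one, Matrix.head_fin_const,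
    Matrix.of_apply, mul_add, mul_sub, add_mul, sub_mul, Complex.exp_add, Complex.exp_sub,
    Complex.exp_neg, one_mul, mul_one]
  have hεc : (ε:ℂ) ≠ 0 := Complex.ofReal_ne_zero.mpr hε
  have hlc : (lam:ℂ) ≠ 0 := Complex.ofReal_ne_zero.mpr hlam
  set p := Complex.exp (Complex.I * (P:ℂ)) with hpdef
  set u := Complex.exp (Complex.I * (S:ℂ)) with hudef
  set v := Complex.exp (Complex.I * (T:ℂ)) with hvdef
  have hp : p ≠ 0 := Complex.exp_ne_zero _
  have hu : u ≠ 0 := Complex.exp_ne_zero _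
  have hv : v ≠ 0 := Complex.exp_ne_zero _
  constructor
  · rintro ⟨⟨h1, -⟩, -⟩
    field_simp at h1 ⊢
    linear_combination h1 + ((ε:ℂ)^2*u - (ε:ℂ)^2*u*v^2) * Complex.I_sq
  · intro h
    field_simp at h
    refine ⟨⟨?_, ?_⟩, ?_, ?_⟩
    · field_simp
      linear_combination h + ((ε:ℂ)^2*u*v^2 - (ε:ℂ)^2*u) * Complex.I_sq
    · field_simp
      ring_nf
      try (simp only [Complex.I_sq]; ring_nf)
    · field_simp
      ring_nf
      try (simp only [Complex.I_sq]; ring_nf)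
    · field_simp
      linear_combination -h + ((ε:ℂ)^2*u - (ε:ℂ)^2*u*v^2) * Complex.I_sq

/-- For lattice functions `a = δ_x^ε φ`, `b = φ + (ε/2)δ_y^ε φ` the discrete zero curvature
condition `𝒰^ε(a(x,y+ε);λ)𝒱^ε(b(x,y);λ) = 𝒱^ε(b(x+ε,y);λ)𝒰^ε(a(x,y);λ)`, identically in
`λ ≠ 0`, is equivalent to the Hirota discretization of the Sine-Gordon equation.  Lattice
points are `(i·ε, j·ε)`. -/
theorem stmt16 (ε : ℝ) (hε : 0 < ε) (φ : ℕ → ℕ → ℝ) :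
    (∀ i j : ℕ, ∀ lam : ℝ, lam ≠ 0 →
      hirU ε ((φ (i + 1) (j + 1) - φ i (j + 1)) / ε) lam *
          hirV ε ((φ i (j + 1) + φ i j) / 2) lam =
        hirV ε ((φ (i + 1) (j + 1) + φ (i + 1) j) / 2) lam *
          hirU ε ((φ (i + 1) j - φ i j) / ε) lam)
    ↔ (∀ i j : ℕ,
        Real.sin ((φ (i + 1) (j + 1) - φ (i + 1) j - φ i (j + 1) + φ i j) / 4) =
          ε ^ 2 / 4 *
            Real.sin ((φ (i + 1) (j + 1) + φ (i + 1) j + φ i (j + 1) + φ i j) / 4)) := by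
  have hε' : ε ≠ 0 := hε.ne'
  constructor
  · intro h i j
    set S : ℝ := (φ (i + 1) (j + 1) - φ (i + 1) j - φ i (j + 1) + φ i j) / 4 with hS
    set T : ℝ := (φ (i + 1) (j + 1) + φ (i + 1) j + φ i (j + 1) + φ i j) / 4 with hT
    set P : ℝ := (φ (i + 1) (j + 1) - φ i (j + 1) + φ (i + 1) j - φ i j) / 4 with hP
    have hm := h i j 1 one_ne_zero
    rw [show (φ (i + 1) (j + 1) - φ i (j + 1)) / ε = 2*(P+S)/ε by rw [hS, hP]; ring,
      show (φ i (j + 1) + φ i j) / 2 = T - P by rw [hT, hP]; ring,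
      show (φ (i + 1) (j + 1) + φ (i + 1) j) / 2 = T + P by rw [hT, hP]; ring,
      show (φ (i + 1) j - φ i j) / ε = 2*(P-S)/ε by rw [hS, hP]; ring] at hm
    exact (hir_key (ε^2/4) S T).mp ((hir_main ε 1 hε' one_ne_zero S T P).mp hm)
  · intro h i j lam hlam
    set S : ℝ := (φ (i + 1) (j + 1) - φ (i + 1) j - φ i (j + 1) + φ i j) / 4 with hS
    set T : ℝ := (φ (i + 1) (j + 1) + φ (i + 1) j + φ i (j + 1) + φ i j) / 4 with hT
    set P : ℝ := (φ (i + 1) (j + 1) - φ i (j + 1) + φ (i + 1) j - φ i j) / 4 with hP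
    rw [show (φ (i + 1) (j + 1) - φ i (j + 1)) / ε = 2*(P+S)/ε by rw [hS, hP]; ring,
      show (φ i (j + 1) + φ i j) / 2 = T - P by rw [hT, hP]; ring,
      show (φ (i + 1) (j + 1) + φ (i + 1) j) / 2 = T + P by rw [hT, hP]; ring,
      show (φ (i + 1) j - φ i j) / ε = 2*(P-S)/ε by rw [hS, hP]; ring]
    exact (hir_main ε lam hε' hlam S T P).mpr ((hir_key (ε^2/4) S T).mpr (h i j))
end

section
/- The Hirota discretization sin¼(φ(x+ε,y+ε) − φ(x+ε,y) − φ(x,y+ε) + φ(x,y)) = (ε²/4)·sin¼(φ(x+ε,y+ε) + φ(x+ε,y) + φ(x,y+ε) + φ(x,y)) of the Sine-Gordon equation approximates the continuous equation: if φ is a C³ solution of ∂_x∂_y φ = sin φ, then for each fixed (x,y) the residual of the Hirota equation evaluated on φ is O(ε⁴) as ε → 0, i.e., the left-hand side minus the right-hand side is O(ε⁴). -/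
open Asymptotics Set
open scoped Interval

section Aux

lemma quad_taylor {E : Type*} [NormedAddCommGroup E] [NormedSpace ℝ E] {f : E → ℝ}
    (hf : ContDiff ℝ 2 f) (c : E) :
    ∃ K : ℝ, 0 ≤ K ∧ ∃ δ : ℝ, 0 < δ ∧ ∀ p : E, ‖p - c‖ ≤ δ →
      |f p - f c - fderiv ℝ f c (p - c)| ≤ K * ‖p - c‖ ^ 2 := by
  have hd : ContDiff ℝ 1 (fun z => fderiv ℝ f z) := hf.fderiv_right (by norm_num)
  obtain ⟨K, t, ht, hlip⟩ := (hd.contDiffAt (x := c)).exists_lipschitzOnWith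
  obtain ⟨δ, hδ, hball⟩ := Metric.mem_nhds_iff.1 ht
  refine ⟨K, K.coe_nonneg, δ / 2, by positivity, ?_⟩
  intro p hp
  have hc : c ∈ Metric.closedBall c ‖p - c‖ := by
    simp [Metric.mem_closedBall, norm_nonneg]
  have hsub : Metric.closedBall c ‖p - c‖ ⊆ t :=
    (Metric.closedBall_subset_ball (lt_of_le_of_lt hp (by linarith))).trans hball
  have hpmem : p ∈ Metric.closedBall c ‖p - c‖ := by
    simp [Metric.mem_closedBall, dist_eq_norm]
  have key := (convex_closedBall c ‖p - c‖).norm_image_sub_le_of_norm_fderiv_le'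
    (f := f) (φ := fderiv ℝ f c) (C := (K : ℝ) * ‖p - c‖)
    (fun z _ => hf.differentiable (by norm_num) z)
    (fun z hz => by
      have hzd := lipschitzOnWith_iff_dist_le_mul.1 hlip _ (hsub hz) _ (hsub hc)
      rw [dist_eq_norm, dist_eq_norm] at hzd
      have hzn : ‖z - c‖ ≤ ‖p - c‖ := by
        simpa [dist_eq_norm] using Metric.mem_closedBall.1 hz
      calc ‖fderiv ℝ f z - fderiv ℝ f c‖ ≤ (K : ℝ) * ‖z - c‖ := hzd
        _ ≤ (K : ℝ) * ‖p - c‖ := by gcongr)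
    hc hpmem
  calc |f p - f c - (fderiv ℝ f c) (p - c)| ≤ (K : ℝ) * ‖p - c‖ * ‖p - c‖ := key
    _ = K * ‖p - c‖ ^ 2 := by ring

lemma sin_cubic {v : ℝ} (hv : |v| ≤ 1) : |Real.sin v - v| ≤ |v| ^ 3 := by
  have key : ∀ w : ℝ, 0 < w → w ≤ 1 → |Real.sin w - w| ≤ |w| ^ 3 := by
    intro w hw hw1
    have h1 := Real.sin_lt hw
    have h2 := Real.sin_gt_sub_cube hw
    rw [abs_of_nonpos (by linarith), abs_of_pos hw]
    nlinarith [pow_pos hw 3]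
  rcases lt_trichotomy v 0 with h | h | h
  · have := key (-v) (by linarith) (by rw [abs_of_neg h] at hv; linarith)
    rw [Real.sin_neg, abs_neg] at this
    calc |Real.sin v - v| = |-Real.sin v - -v| := by rw [← abs_neg]; ring_nf
      _ ≤ |v| ^ 3 := this
  · simp [h]
  · exact key v h (by rwa [abs_of_pos h] at hv)

lemma taylor1 {h : ℝ → ℝ} (hh : ContDiff ℝ 2 h) :
    ∃ K : ℝ, 0 ≤ K ∧ ∃ δ : ℝ, 0 < δ ∧ ∀ t : ℝ, |t| ≤ δ →
      |h t - h 0 - deriv h 0 * t| ≤ K * t ^ 2 := by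
  obtain ⟨K, hK, δ, hδ, hbd⟩ := quad_taylor hh 0
  refine ⟨K, hK, δ, hδ, fun t ht => ?_⟩
  have := hbd t (by simpa using ht)
  have hfd : fderiv ℝ h 0 (t - 0) = deriv h 0 * t := by
    rw [sub_zero, show t = t • (1:ℝ) by simp, map_smul, fderiv_apply_one_eq_deriv]
    simp [mul_comm]
  rw [hfd] at this
  simpa [sq_abs] using this

lemma integral_affine (p m q r : ℝ) :
    ∫ t in p..(p + m), (q + (t - p) * r) = m * q + m ^ 2 / 2 * r := by
  have hd : ∀ t : ℝ, HasDerivAt (fun t => q * t + (t - p) ^ 2 / 2 * r)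
      (q + (t - p) * r) t := by
    intro t
    have h1 : HasDerivAt (fun t : ℝ => q * t) q t := by
      simpa using (hasDerivAt_id t).const_mul q
    have h2 : HasDerivAt (fun t : ℝ => (t - p) ^ 2 / 2 * r) ((t - p) * r) t := by
      have := (((hasDerivAt_id t).sub_const p).pow 2).div_const 2 |>.mul_const r
      refine this.congr_deriv ?_
      simp
    exact h1.add h2
  rw [intervalIntegral.integral_eq_sub_of_hasDerivAt (fun t _ => hd t)
    ((Continuous.add continuous_const (by continuity)).intervalIntegrable _ _)]
  ring

end Aux

set_option maxHeartbeats 2000000 in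
/-- The Hirota discretization approximates the Sine-Gordon equation: for a `C³` solution
`φ` of `∂_x∂_y φ = sin φ` and each fixed `(x,y)`, the residual of the Hirota equation
evaluated on `φ` is `O(ε⁴)` as `ε → 0⁺`. -/
theorem stmt17 (φ : ℝ → ℝ → ℝ) (hφ : ContDiff ℝ 3 (Function.uncurry φ))
    (hSG : ∀ x y : ℝ, deriv (fun t => deriv (fun s => φ s t) x) y = Real.sin (φ x y)) :
    ∀ x y : ℝ,
      (fun ε : ℝ =>
          Real.sin ((φ (x + ε) (y + ε) - φ (x + ε) y - φ x (y + ε) + φ x y) / 4) -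
            ε ^ 2 / 4 *
              Real.sin ((φ (x + ε) (y + ε) + φ (x + ε) y + φ x (y + ε) + φ x y) / 4))
        =O[nhdsWithin 0 (Set.Ioi 0)] fun ε : ℝ => ε ^ 4 := by
  intro x y
  have hud : Differentiable ℝ (Function.uncurry φ) := hφ.differentiable (by norm_num)
  have hfd : ContDiff ℝ 2 (fun p => fderiv ℝ (Function.uncurry φ) p) :=
    hφ.fderiv_right (by norm_num)
  set d1 : ℝ → ℝ → ℝ := fun s t => fderiv ℝ (Function.uncurry φ) (s, t) (1, 0) with hd1
  -- partial derivative in the first variable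
  have P1 : ∀ s t : ℝ, HasDerivAt (fun s' => φ s' t) (d1 s t) s := by
    intro s t
    have h1 : HasDerivAt (fun s' : ℝ => (s', t)) ((1 : ℝ), (0 : ℝ)) s :=
      (hasDerivAt_id s).prodMk (hasDerivAt_const s t)
    exact (hud (s, t)).hasFDerivAt.comp_hasDerivAt s h1
  have cont_d1 : Continuous (fun p : ℝ × ℝ => fderiv ℝ (Function.uncurry φ) p (1, 0)) :=
    (hfd.continuous).clm_apply continuous_const
  -- derivative of d1 in the second variable is sin φ
  have P3 : ∀ s t : ℝ, HasDerivAt (fun t' => d1 s t') (Real.sin (φ s t)) t := by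
    intro s t
    have hdiff : DifferentiableAt ℝ (fun t' => d1 s t') t := by
      have h1 : Differentiable ℝ (fun t' : ℝ => fderiv ℝ (Function.uncurry φ) (s, t')) :=
        (hfd.differentiable (by norm_num)).comp
          ((differentiable_const s).prodMk differentiable_id)
      exact (h1.clm_apply (differentiable_const _)) t
    have heq : (fun t' => d1 s t') = fun t' => deriv (fun s' => φ s' t') s :=
      funext fun t' => ((P1 s t').deriv).symm
    have hder : deriv (fun t' => d1 s t') t = Real.sin (φ s t) := by
      rw [heq]; exact hSG s t
    exact hder ▸ hdiff.hasDerivAt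
  -- FTC in first variable
  have FTC1 : ∀ t a b : ℝ, ∫ s in a..b, d1 s t = φ b t - φ a t := by
    intro t a b
    refine intervalIntegral.integral_eq_sub_of_hasDerivAt (fun s _ => P1 s t) ?_
    exact (cont_d1.comp (continuous_id.prodMk continuous_const)).intervalIntegrable _ _
  have contφ : Continuous (Function.uncurry φ) := hφ.continuous
  -- FTC in second variable
  have FTC2 : ∀ s a b : ℝ, ∫ t in a..b, Real.sin (φ s t) = d1 s b - d1 s a := by
    intro s a b
    refine intervalIntegral.integral_eq_sub_of_hasDerivAt (fun t _ => P3 s t) ?_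
    have : Continuous fun t : ℝ => Real.sin (φ s t) :=
      Real.continuous_sin.comp (contφ.comp (continuous_const.prodMk continuous_id))
    exact this.intervalIntegrable _ _
  -- the double difference as a double integral
  have KEY : ∀ ε : ℝ, φ (x + ε) (y + ε) - φ (x + ε) y - φ x (y + ε) + φ x y
      = ∫ s in x..(x + ε), ∫ t in y..(y + ε), Real.sin (φ s t) := by
    intro ε
    have hi : ∀ t : ℝ, IntervalIntegrable (fun s => d1 s t) MeasureTheory.volume x (x + ε) :=
      fun t => (cont_d1.comp (continuous_id.prodMk continuous_const)).intervalIntegrable _ _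
    have hsub : ∫ s in x..(x + ε), (d1 s (y + ε) - d1 s y)
        = (φ (x + ε) (y + ε) - φ x (y + ε)) - (φ (x + ε) y - φ x y) := by
      rw [intervalIntegral.integral_sub (hi _) (hi _), FTC1, FTC1]
    have hcongr : ∫ s in x..(x + ε), ∫ t in y..(y + ε), Real.sin (φ s t)
        = ∫ s in x..(x + ε), (d1 s (y + ε) - d1 s y) :=
      intervalIntegral.integral_congr fun s _ => FTC2 s y (y + ε)
    rw [hcongr, hsub]; ring
  -- the nonlinearity F and its derivative data
  set F : ℝ × ℝ → ℝ := fun p => Real.sin (Function.uncurry φ p) with hFdef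
  have hF : ContDiff ℝ 2 F := (Real.contDiff_sin).comp (hφ.of_le (by norm_num))
  set a : ℝ := Real.sin (φ x y) with ha
  set b1 : ℝ := fderiv ℝ F (x, y) (1, 0) with hb1
  set b2 : ℝ := fderiv ℝ F (x, y) (0, 1) with hb2
  obtain ⟨K, hK0, δ, hδ0, hbd⟩ := quad_taylor hF (x, y)
  -- pointwise quadratic bound on the square
  have PB : ∀ ε : ℝ, 0 < ε → ε ≤ δ → ∀ s t : ℝ, s ∈ Ι x (x + ε) → t ∈ Ι y (y + ε) →
      |Real.sin (φ s t) - (a + (s - x) * b1 + (t - y) * b2)| ≤ K * ε ^ 2 := by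
    intro ε hε hεδ s t hs ht
    rw [uIoc_of_le (by linarith)] at hs ht
    have hsx : 0 ≤ s - x := by linarith [hs.1]
    have hsx' : s - x ≤ ε := by linarith [hs.2]
    have hty : 0 ≤ t - y := by linarith [ht.1]
    have hty' : t - y ≤ ε := by linarith [ht.2]
    have hnorm : ‖((s, t) : ℝ × ℝ) - (x, y)‖ ≤ ε := by
      rw [Prod.norm_def]
      simp only [Prod.fst_sub, Prod.snd_sub, Real.norm_eq_abs]
      rw [max_le_iff]
      constructor <;> rw [abs_le] <;> constructor <;> simp <;> linarith
    have hlin : fderiv ℝ F (x, y) (((s, t) : ℝ × ℝ) - (x, y)) = (s - x) * b1 + (t - y) * b2 := by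
      have : (((s, t) : ℝ × ℝ) - (x, y)) = (s - x) • ((1 : ℝ), (0 : ℝ)) + (t - y) • ((0 : ℝ), (1 : ℝ)) := by
        simp [Prod.ext_iff]
      rw [this, map_add, map_smul, map_smul, hb1, hb2]
      simp [smul_eq_mul]
    have := hbd ((s, t) : ℝ × ℝ) (le_trans hnorm hεδ)
    rw [hlin] at this
    have hFst : F ((s, t) : ℝ × ℝ) = Real.sin (φ s t) := rfl
    have hFc : F ((x, y) : ℝ × ℝ) = a := rfl
    rw [hFst, hFc] at this
    calc |Real.sin (φ s t) - (a + (s - x) * b1 + (t - y) * b2)|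
        = |Real.sin (φ s t) - a - ((s - x) * b1 + (t - y) * b2)| := by ring_nf
      _ ≤ K * ‖((s, t) : ℝ × ℝ) - (x, y)‖ ^ 2 := this
      _ ≤ K * ε ^ 2 := by gcongr
  -- the integral of the linear part
  have LIN : ∀ ε : ℝ,
      ∫ s in x..(x + ε), ∫ t in y..(y + ε), (a + (s - x) * b1 + (t - y) * b2)
        = ε ^ 2 * a + ε ^ 3 / 2 * b1 + ε ^ 3 / 2 * b2 := by
    intro ε
    have step : ∫ s in x..(x + ε), ∫ t in y..(y + ε), (a + (s - x) * b1 + (t - y) * b2)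
        = ∫ s in x..(x + ε), ((ε * a + ε ^ 2 / 2 * b2) + (s - x) * (ε * b1)) := by
      refine intervalIntegral.integral_congr fun s _ => ?_
      rw [integral_affine y ε (a + (s - x) * b1) b2]; ring
    rw [step, integral_affine x ε (ε * a + ε ^ 2 / 2 * b2) (ε * b1)]; ring
  -- quantitative bound for the remainder of the double integral
  have BND : ∀ ε : ℝ, 0 < ε → ε ≤ δ →
      |(φ (x + ε) (y + ε) - φ (x + ε) y - φ x (y + ε) + φ x y)
        - (ε ^ 2 * a + ε ^ 3 / 2 * b1 + ε ^ 3 / 2 * b2)| ≤ K * ε ^ 4 := by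
    intro ε hε hεδ
    rw [KEY ε, ← LIN ε]
    have hg1 : ∫ s in x..(x + ε), ∫ t in y..(y + ε), Real.sin (φ s t)
        = ∫ s in x..(x + ε), (d1 s (y + ε) - d1 s y) :=
      intervalIntegral.integral_congr fun s _ => FTC2 s y (y + ε)
    have hg2 : ∫ s in x..(x + ε), ∫ t in y..(y + ε), (a + (s - x) * b1 + (t - y) * b2)
        = ∫ s in x..(x + ε), ((ε * a + ε ^ 2 / 2 * b2) + (s - x) * (ε * b1)) := by
      refine intervalIntegral.integral_congr fun s _ => ?_
      rw [integral_affine y ε (a + (s - x) * b1) b2]; ring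
    have hint1 : IntervalIntegrable (fun s => d1 s (y + ε) - d1 s y)
        MeasureTheory.volume x (x + ε) := by
      apply Continuous.intervalIntegrable
      exact ((cont_d1.comp (continuous_id.prodMk continuous_const)).sub
        (cont_d1.comp (continuous_id.prodMk continuous_const)))
    have hint2 : IntervalIntegrable (fun s => (ε * a + ε ^ 2 / 2 * b2) + (s - x) * (ε * b1))
        MeasureTheory.volume x (x + ε) := by
      exact (continuous_const.add ((continuous_id.sub continuous_const).mul
        continuous_const)).intervalIntegrable _ _
    rw [hg1, hg2, ← intervalIntegral.integral_sub hint1 hint2]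
    have hbnd : ∀ s ∈ Ι x (x + ε),
        ‖(d1 s (y + ε) - d1 s y) - ((ε * a + ε ^ 2 / 2 * b2) + (s - x) * (ε * b1))‖
          ≤ K * ε ^ 3 := by
      intro s hs
      have hrw1 : d1 s (y + ε) - d1 s y = ∫ t in y..(y + ε), Real.sin (φ s t) :=
        (FTC2 s y (y + ε)).symm
      have hrw2 : (ε * a + ε ^ 2 / 2 * b2) + (s - x) * (ε * b1)
          = ∫ t in y..(y + ε), (a + (s - x) * b1 + (t - y) * b2) := by
        rw [integral_affine y ε (a + (s - x) * b1) b2]; ring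
      have hint3 : IntervalIntegrable (fun t => Real.sin (φ s t))
          MeasureTheory.volume y (y + ε) := by
        apply Continuous.intervalIntegrable
        exact Real.continuous_sin.comp (contφ.comp (continuous_const.prodMk continuous_id))
      have hint4 : IntervalIntegrable (fun t => a + (s - x) * b1 + (t - y) * b2)
          MeasureTheory.volume y (y + ε) :=
        (continuous_const.add ((continuous_id.sub continuous_const).mul
          continuous_const)).intervalIntegrable _ _
      rw [hrw1, hrw2, ← intervalIntegral.integral_sub hint3 hint4]
      have hb2' := intervalIntegral.norm_integral_le_of_norm_le_const
        (C := K * ε ^ 2)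
        (f := fun t => Real.sin (φ s t) - (a + (s - x) * b1 + (t - y) * b2))
        (a := y) (b := y + ε)
        (fun t ht => by
          simpa [Real.norm_eq_abs] using PB ε hε hεδ s t hs ht)
      have : |y + ε - y| = ε := by rw [add_sub_cancel_left, abs_of_pos hε]
      rw [this] at hb2'
      calc ‖∫ t in y..(y + ε), (Real.sin (φ s t) - (a + (s - x) * b1 + (t - y) * b2))‖
          ≤ K * ε ^ 2 * ε := hb2'
        _ = K * ε ^ 3 := by ring
    have hb3 := intervalIntegral.norm_integral_le_of_norm_le_const
      (C := K * ε ^ 3)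
      (f := fun s => (d1 s (y + ε) - d1 s y) - ((ε * a + ε ^ 2 / 2 * b2) + (s - x) * (ε * b1)))
      (a := x) (b := x + ε) hbnd
    have hxe : |x + ε - x| = ε := by rw [add_sub_cancel_left, abs_of_pos hε]
    rw [hxe] at hb3
    calc |∫ s in x..(x + ε),
          ((d1 s (y + ε) - d1 s y) - ((ε * a + ε ^ 2 / 2 * b2) + (s - x) * (ε * b1)))|
        ≤ K * ε ^ 3 * ε := hb3
      _ = K * ε ^ 4 := by ring
  -- the function appearing in the right-hand side, as a function of ε
  have hh2 : ContDiff ℝ 2 (fun ε : ℝ =>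
      Real.sin ((φ (x + ε) (y + ε) + φ (x + ε) y + φ x (y + ε) + φ x y) / 4)) := by
    have c1 : ContDiff ℝ 2 (fun ε : ℝ => φ (x + ε) (y + ε)) :=
      (hφ.of_le (by norm_num)).comp
        (((contDiff_const).add contDiff_id).prodMk ((contDiff_const).add contDiff_id))
    have c2 : ContDiff ℝ 2 (fun ε : ℝ => φ (x + ε) y) :=
      (hφ.of_le (by norm_num)).comp
        (((contDiff_const).add contDiff_id).prodMk contDiff_const)
    have c3 : ContDiff ℝ 2 (fun ε : ℝ => φ x (y + ε)) :=
      (hφ.of_le (by norm_num)).comp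
        ((contDiff_const).prodMk ((contDiff_const).add contDiff_id))
    exact Real.contDiff_sin.comp ((((c1.add c2).add c3).add contDiff_const).div_const 4)
  -- value and derivative of that function at 0
  have h0eq : Real.sin ((φ (x + 0) (y + 0) + φ (x + 0) y + φ x (y + 0) + φ x y) / 4) = a := by
    rw [ha]; norm_num
    rw [show (φ x y + φ x y + φ x y + φ x y) / 4 = φ x y by ring]
  have hchain : HasFDerivAt F
      (Real.cos (Function.uncurry φ (x, y)) • fderiv ℝ (Function.uncurry φ) (x, y)) (x, y) :=
    (Real.hasDerivAt_sin _).comp_hasFDerivAt (x, y) (hud (x, y)).hasFDerivAt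
  have hb1' : b1 = Real.cos (φ x y) * fderiv ℝ (Function.uncurry φ) (x, y) (1, 0) := by
    rw [hb1, hchain.fderiv]
    simp [smul_eq_mul]
  have hb2'' : b2 = Real.cos (φ x y) * fderiv ℝ (Function.uncurry φ) (x, y) (0, 1) := by
    rw [hb2, hchain.fderiv]
    simp [smul_eq_mul]
  have hadd11 : fderiv ℝ (Function.uncurry φ) (x, y) ((1 : ℝ), (1 : ℝ))
      = fderiv ℝ (Function.uncurry φ) (x, y) (1, 0)
        + fderiv ℝ (Function.uncurry φ) (x, y) (0, 1) := by
    rw [← map_add]; norm_num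
  have hder0 : deriv (fun ε : ℝ =>
      Real.sin ((φ (x + ε) (y + ε) + φ (x + ε) y + φ x (y + ε) + φ x y) / 4)) 0
      = (b1 + b2) / 2 := by
    have i1 : HasDerivAt (fun ε : ℝ => (x + ε, y + ε)) (((1 : ℝ), (1 : ℝ)) : ℝ × ℝ) 0 :=
      ((hasDerivAt_id 0).const_add x).prodMk ((hasDerivAt_id 0).const_add y)
    have i2 : HasDerivAt (fun ε : ℝ => (x + ε, y)) (((1 : ℝ), (0 : ℝ)) : ℝ × ℝ) 0 :=
      ((hasDerivAt_id 0).const_add x).prodMk (hasDerivAt_const 0 y)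
    have i3 : HasDerivAt (fun ε : ℝ => (x, y + ε)) (((0 : ℝ), (1 : ℝ)) : ℝ × ℝ) 0 :=
      (hasDerivAt_const 0 x).prodMk ((hasDerivAt_id 0).const_add y)
    have e1 : HasDerivAt (fun ε : ℝ => φ (x + ε) (y + ε))
        (fderiv ℝ (Function.uncurry φ) (x, y) (1, 1)) 0 := by
      have := (hud ((x + 0 : ℝ), (y + 0 : ℝ))).hasFDerivAt.comp_hasDerivAt 0 i1
      simp at this; exact this
    have e2 : HasDerivAt (fun ε : ℝ => φ (x + ε) y)
        (fderiv ℝ (Function.uncurry φ) (x, y) (1, 0)) 0 := by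
      have := (hud ((x + 0 : ℝ), y)).hasFDerivAt.comp_hasDerivAt 0 i2
      simp at this; exact this
    have e3 : HasDerivAt (fun ε : ℝ => φ x (y + ε))
        (fderiv ℝ (Function.uncurry φ) (x, y) (0, 1)) 0 := by
      have := (hud (x, (y + 0 : ℝ))).hasFDerivAt.comp_hasDerivAt 0 i3
      simp at this; exact this
    have eS : HasDerivAt (fun ε : ℝ =>
        (φ (x + ε) (y + ε) + φ (x + ε) y + φ x (y + ε) + φ x y) / 4)
        ((fderiv ℝ (Function.uncurry φ) (x, y) (1, 1)
          + fderiv ℝ (Function.uncurry φ) (x, y) (1, 0)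
          + fderiv ℝ (Function.uncurry φ) (x, y) (0, 1)) / 4) 0 :=
      (((e1.add e2).add e3).add_const (φ x y)).div_const 4
    have eH := (Real.hasDerivAt_sin
      ((φ (x + 0) (y + 0) + φ (x + 0) y + φ x (y + 0) + φ x y) / 4)).comp 0 eS
    have eH' : HasDerivAt (fun ε : ℝ =>
        Real.sin ((φ (x + ε) (y + ε) + φ (x + ε) y + φ x (y + ε) + φ x y) / 4))
        (Real.cos ((φ (x + 0) (y + 0) + φ (x + 0) y + φ x (y + 0) + φ x y) / 4) *
          ((fderiv ℝ (Function.uncurry φ) (x, y) (1, 1)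
            + fderiv ℝ (Function.uncurry φ) (x, y) (1, 0)
            + fderiv ℝ (Function.uncurry φ) (x, y) (0, 1)) / 4)) 0 := eH
    rw [eH'.deriv, hb1', hb2'', hadd11]
    norm_num
    rw [show (φ x y + φ x y + φ x y + φ x y) / 4 = φ x y by ring]
    ring
  clear_value a b1 b2 F
  obtain ⟨K2, hK20, δ2, hδ20, hbd2⟩ := taylor1 hh2
  -- the constant M bounding the double difference
  set M : ℝ := K + |a| + |b1| + |b2| + 1 with hM
  have hM1 : 1 ≤ M := by
    have := abs_nonneg a; have := abs_nonneg b1; have := abs_nonneg b2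
    rw [hM]; linarith
  have hM0 : 0 < M := by linarith
  clear_value M
  -- final assembly
  rw [isBigO_iff]
  refine ⟨M ^ 3 / 64 + K / 4 + K2 / 4, ?_⟩
  have hδF0 : 0 < min δ (min 1 (min (1 / M) δ2)) := by positivity
  filter_upwards [Ioc_mem_nhdsGT_of_mem (Set.mem_Ico.2 ⟨le_refl (0:ℝ), hδF0⟩)] with ε hεmem
  obtain ⟨hε0, hεδF⟩ := hεmem
  have hεδ : ε ≤ δ := le_trans hεδF (min_le_left _ _)
  have hε1 : ε ≤ 1 := le_trans hεδF (le_trans (min_le_right _ _) (min_le_left _ _))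
  have hεM : ε ≤ 1 / M :=
    le_trans hεδF (le_trans (min_le_right _ _) (le_trans (min_le_right _ _) (min_le_left _ _)))
  have hεδ2 : ε ≤ δ2 :=
    le_trans hεδF (le_trans (min_le_right _ _) (le_trans (min_le_right _ _) (min_le_right _ _)))
  have hB := BND ε hε0 hεδ
  -- bound on the double difference itself
  have hε2 : ε ^ 2 ≤ 1 := by nlinarith
  have hε42 : ε ^ 4 ≤ ε ^ 2 := by nlinarith [sq_nonneg ε]
  have hε32 : ε ^ 3 ≤ ε ^ 2 := by nlinarith [sq_nonneg ε]
  have hP : |ε ^ 2 * a + ε ^ 3 / 2 * b1 + ε ^ 3 / 2 * b2|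
      ≤ ε ^ 2 * |a| + ε ^ 3 / 2 * |b1| + ε ^ 3 / 2 * |b2| := by
    calc |ε ^ 2 * a + ε ^ 3 / 2 * b1 + ε ^ 3 / 2 * b2|
        ≤ |ε ^ 2 * a + ε ^ 3 / 2 * b1| + |ε ^ 3 / 2 * b2| := abs_add_le _ _
      _ ≤ |ε ^ 2 * a| + |ε ^ 3 / 2 * b1| + |ε ^ 3 / 2 * b2| := by
          linarith [abs_add_le (ε ^ 2 * a) (ε ^ 3 / 2 * b1)]
      _ = ε ^ 2 * |a| + ε ^ 3 / 2 * |b1| + ε ^ 3 / 2 * |b2| := by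
          rw [abs_mul, abs_mul, abs_mul, abs_of_pos (pow_pos hε0 2),
            abs_of_pos (by positivity : (0:ℝ) < ε ^ 3 / 2)]
  have hΔ : |φ (x + ε) (y + ε) - φ (x + ε) y - φ x (y + ε) + φ x y| ≤ M * ε ^ 2 := by
    have h5 := abs_add_le
      ((φ (x + ε) (y + ε) - φ (x + ε) y - φ x (y + ε) + φ x y)
        - (ε ^ 2 * a + ε ^ 3 / 2 * b1 + ε ^ 3 / 2 * b2))
      (ε ^ 2 * a + ε ^ 3 / 2 * b1 + ε ^ 3 / 2 * b2)
    rw [sub_add_cancel] at h5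
    have hKe : K * ε ^ 4 ≤ K * ε ^ 2 := mul_le_mul_of_nonneg_left hε42 hK0
    have he32 : ε ^ 3 / 2 ≤ ε ^ 2 := by linarith [hε32, pow_pos hε0 3]
    have hb1e : ε ^ 3 / 2 * |b1| ≤ ε ^ 2 * |b1| := mul_le_mul_of_nonneg_right he32 (abs_nonneg b1)
    have hb2e : ε ^ 3 / 2 * |b2| ≤ ε ^ 2 * |b2| := mul_le_mul_of_nonneg_right he32 (abs_nonneg b2)
    have hfin : K * ε ^ 2 + (ε ^ 2 * |a| + ε ^ 2 * |b1| + ε ^ 2 * |b2|) ≤ M * ε ^ 2 := by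
      rw [hM]; nlinarith [sq_nonneg ε]
    linarith
  -- the cubic sine bound
  have hMε : M * ε ^ 2 ≤ ε := by
    have h := (le_div_iff₀ hM0).mp hεM
    nlinarith
  have hΔ4 : |(φ (x + ε) (y + ε) - φ (x + ε) y - φ x (y + ε) + φ x y) / 4| ≤ 1 := by
    rw [abs_div, abs_of_pos (by norm_num : (0:ℝ) < 4)]
    have : |φ (x + ε) (y + ε) - φ (x + ε) y - φ x (y + ε) + φ x y| ≤ 1 := by
      calc |φ (x + ε) (y + ε) - φ (x + ε) y - φ x (y + ε) + φ x y| ≤ M * ε ^ 2 := hΔ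
        _ ≤ ε := hMε
        _ ≤ 1 := hε1
    linarith
  have hA := sin_cubic hΔ4
  have hA' : |Real.sin ((φ (x + ε) (y + ε) - φ (x + ε) y - φ x (y + ε) + φ x y) / 4)
      - (φ (x + ε) (y + ε) - φ (x + ε) y - φ x (y + ε) + φ x y) / 4|
      ≤ M ^ 3 / 64 * ε ^ 4 := by
    have h1 : |(φ (x + ε) (y + ε) - φ (x + ε) y - φ x (y + ε) + φ x y) / 4|
        ≤ M * ε ^ 2 / 4 := by
      rw [abs_div, abs_of_pos (by norm_num : (0:ℝ) < 4)]; linarith [hΔ]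
    have h2 : |(φ (x + ε) (y + ε) - φ (x + ε) y - φ x (y + ε) + φ x y) / 4| ^ 3
        ≤ (M * ε ^ 2 / 4) ^ 3 := by
      apply pow_le_pow_left₀ (abs_nonneg _) h1
    have h3 : (M * ε ^ 2 / 4) ^ 3 ≤ M ^ 3 / 64 * ε ^ 4 := by
      have h6 : ε ^ 6 ≤ ε ^ 4 := by nlinarith [pow_pos hε0 2, pow_pos hε0 4]
      have hM3 : (0:ℝ) ≤ M ^ 3 := by positivity
      calc (M * ε ^ 2 / 4) ^ 3 = M ^ 3 / 64 * ε ^ 6 := by ring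
        _ ≤ M ^ 3 / 64 * ε ^ 4 :=
          mul_le_mul_of_nonneg_left h6 (by positivity : (0:ℝ) ≤ M ^ 3 / 64)
    exact le_trans hA (le_trans h2 h3)
  -- the second-order Taylor bound for the sine of the average
  have hCv : |Real.sin ((φ (x + ε) (y + ε) + φ (x + ε) y + φ x (y + ε) + φ x y) / 4)
      - a - (b1 + b2) / 2 * ε| ≤ K2 * ε ^ 2 := by
    have := hbd2 ε (by rw [abs_of_pos hε0]; exact hεδ2)
    rw [h0eq, hder0] at this
    exact this
  -- put the three pieces together
  rw [Real.norm_eq_abs, Real.norm_eq_abs, abs_of_pos (pow_pos hε0 4)]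
  set A : ℝ := Real.sin ((φ (x + ε) (y + ε) - φ (x + ε) y - φ x (y + ε) + φ x y) / 4)
    - (φ (x + ε) (y + ε) - φ (x + ε) y - φ x (y + ε) + φ x y) / 4 with hA0
  set Bv : ℝ := (φ (x + ε) (y + ε) - φ (x + ε) y - φ x (y + ε) + φ x y)
    - (ε ^ 2 * a + ε ^ 3 / 2 * b1 + ε ^ 3 / 2 * b2) with hBv0
  set Cv : ℝ := Real.sin ((φ (x + ε) (y + ε) + φ (x + ε) y + φ x (y + ε) + φ x y) / 4)
    - a - (b1 + b2) / 2 * ε with hCv0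
  have hdecomp : Real.sin ((φ (x + ε) (y + ε) - φ (x + ε) y - φ x (y + ε) + φ x y) / 4) -
      ε ^ 2 / 4 *
        Real.sin ((φ (x + ε) (y + ε) + φ (x + ε) y + φ x (y + ε) + φ x y) / 4)
      = A + 1 / 4 * Bv - ε ^ 2 / 4 * Cv := by
    rw [hA0, hBv0, hCv0]; ring
  rw [hdecomp]
  have t1 : |A + 1 / 4 * Bv - ε ^ 2 / 4 * Cv| ≤ |A| + 1 / 4 * |Bv| + ε ^ 2 / 4 * |Cv| := by
    have h1 : |A + 1 / 4 * Bv - ε ^ 2 / 4 * Cv| ≤ |A + 1 / 4 * Bv| + |ε ^ 2 / 4 * Cv| := by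
      rw [sub_eq_add_neg]
      refine (abs_add_le _ _).trans ?_
      rw [abs_neg]
    have h2 := abs_add_le A (1 / 4 * Bv)
    have h3 : |(1:ℝ) / 4 * Bv| = 1 / 4 * |Bv| := by rw [abs_mul]; norm_num
    have h4 : |ε ^ 2 / 4 * Cv| = ε ^ 2 / 4 * |Cv| := by
      rw [abs_mul, abs_of_nonneg (by positivity : (0:ℝ) ≤ ε ^ 2 / 4)]
    rw [h3] at h2; rw [h4] at h1; linarith
  have hCfin : ε ^ 2 / 4 * |Cv| ≤ K2 / 4 * ε ^ 4 := by
    calc ε ^ 2 / 4 * |Cv| ≤ ε ^ 2 / 4 * (K2 * ε ^ 2) := by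
          have : (0:ℝ) ≤ ε ^ 2 / 4 := by positivity
          exact mul_le_mul_of_nonneg_left hCv this
      _ = K2 / 4 * ε ^ 4 := by ring
  calc |A + 1 / 4 * Bv - ε ^ 2 / 4 * Cv| ≤ |A| + 1 / 4 * |Bv| + ε ^ 2 / 4 * |Cv| := t1
    _ ≤ M ^ 3 / 64 * ε ^ 4 + 1 / 4 * (K * ε ^ 4) + K2 / 4 * ε ^ 4 := by
        have := hA'; have := hB
        gcongr <;> linarith
    _ = (M ^ 3 / 64 + K / 4 + K2 / 4) * ε ^ 4 := by ring
end

section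
/- Consider a compatible discrete d-dimensional hyperbolic system: dependent variables a_k (k = 1,…,N) on the lattice ∏_i ([0,r_i] ∩ ε_iℤ), evolution directions ℰ_k ⊆ {1,…,d} nonempty, equations δ^{ε_i}_{x_i} a_k = f_{(k,i)}(a₁,…,a_N) for i ∈ ℰ_k, where (1) f_{(k,i)} depends only on those a_ℓ with ℰ_k \ {i} ⊆ ℰ_ℓ, and (2) for all k and all i,j ∈ ℰ_k: ε_i f_{(k,i)}(ā) + ε_j f_{(k,j)}(ā + ε_i f⃗_i(ā)) = ε_j f_{(k,j)}(ā) + ε_i f_{(k,i)}(ā + ε_j f⃗_j(ā)) identically in ā. Then for any Goursat data prescribing a_k on the sublattice 𝒢_k spanned by the directions in the complement 𝒟_k = {1,…,d} \ ℰ_k, there exists a unique solution of the system on the whole lattice attaining these data. -/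
private lemma sum_update_sub_lt {d : ℕ} (x : Fin d → ℕ) (i : Fin d) (hi : x i ≠ 0) :
    ∑ j, Function.update x i (x i - 1) j < ∑ j, x j := by
  apply Finset.sum_lt_sum
  · intro j _
    rcases eq_or_ne j i with rfl | h
    · simp
    · simp [Function.update_of_ne h]
  · exact ⟨i, Finset.mem_univ i, by simp; omega⟩

private def sol {d N : ℕ} {X : Fin N → Type*} [∀ k, AddCommGroup (X k)] [∀ k, Module ℝ (X k)]
    (ε : Fin d → ℝ) (E : Fin N → Finset (Fin d))
    (f : (k : Fin N) → Fin d → ((l : Fin N) → X l) → X k)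
    (g : (k : Fin N) → (Fin d → ℕ) → X k)
    (x : Fin d → ℕ) (k : Fin N) : X k :=
  if h : ((E k).filter (fun i => x i ≠ 0)).Nonempty then
    sol ε E f g (Function.update x (((E k).filter (fun i => x i ≠ 0)).min' h)
        (x (((E k).filter (fun i => x i ≠ 0)).min' h) - 1)) k
      + ε (((E k).filter (fun i => x i ≠ 0)).min' h) •
        f k (((E k).filter (fun i => x i ≠ 0)).min' h)
          (fun l => sol ε E f g (Function.update x (((E k).filter (fun i => x i ≠ 0)).min' h)
            (x (((E k).filter (fun i => x i ≠ 0)).min' h) - 1)) l)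
  else g k x
termination_by ∑ i, x i
decreasing_by
  all_goals
    exact sum_update_sub_lt x _ (by
      have hm := Finset.min'_mem _ h
      rw [Finset.mem_filter] at hm
      exact hm.2)

section lemmas
variable {d N : ℕ} {X : Fin N → Type*} [∀ k, AddCommGroup (X k)] [∀ k, Module ℝ (X k)]
    (ε : Fin d → ℝ) (E : Fin N → Finset (Fin d))
    (f : (k : Fin N) → Fin d → ((l : Fin N) → X l) → X k)
    (g : (k : Fin N) → (Fin d → ℕ) → X k)

private lemma sol_zero {x : Fin d → ℕ} {k : Fin N} (h : ∀ i ∈ E k, x i = 0) :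
    sol ε E f g x k = g k x := by
  rw [sol, dif_neg]
  simp only [Finset.not_nonempty_iff_eq_empty, Finset.filter_eq_empty_iff]
  intro i hi
  simp [h i hi]

private lemma sol_pos {x : Fin d → ℕ} {k : Fin N}
    (h : ((E k).filter (fun i => x i ≠ 0)).Nonempty) :
    sol ε E f g x k =
      sol ε E f g (Function.update x (((E k).filter (fun i => x i ≠ 0)).min' h)
        (x (((E k).filter (fun i => x i ≠ 0)).min' h) - 1)) k
      + ε (((E k).filter (fun i => x i ≠ 0)).min' h) •
        f k (((E k).filter (fun i => x i ≠ 0)).min' h)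
          (fun l => sol ε E f g (Function.update x (((E k).filter (fun i => x i ≠ 0)).min' h)
            (x (((E k).filter (fun i => x i ≠ 0)).min' h) - 1)) l) := by
  rw [sol, dif_pos h]

end lemmas

section step
variable {d N : ℕ} {X : Fin N → Type*} [∀ k, AddCommGroup (X k)] [∀ k, Module ℝ (X k)]
    {ε : Fin d → ℝ} {E : Fin N → Finset (Fin d)}
    {f : (k : Fin N) → Fin d → ((l : Fin N) → X l) → X k}
    {g : (k : Fin N) → (Fin d → ℕ) → X k}

private lemma sol_step
    (hdep : ∀ k : Fin N, ∀ i ∈ E k, ∀ v w : (l : Fin N) → X l,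
      (∀ l : Fin N, E k \ {i} ⊆ E l → v l = w l) → f k i v = f k i w)
    (hcomp : ∀ k : Fin N, ∀ i ∈ E k, ∀ j ∈ E k, ∀ v : (l : Fin N) → X l,
      ε i • f k i v + ε j • f k j (fun l => v l + ε i • f l i v) =
        ε j • f k j v + ε i • f k i (fun l => v l + ε j • f l j v)) :
    ∀ x : Fin d → ℕ, ∀ k : Fin N, ∀ i ∈ E k,
      sol ε E f g (Function.update x i (x i + 1)) k
        = sol ε E f g x k + ε i • f k i (fun l => sol ε E f g x l) := by
  suffices H : ∀ n, ∀ x : Fin d → ℕ, ∑ j, x j = n → ∀ k : Fin N, ∀ i ∈ E k,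
      sol ε E f g (Function.update x i (x i + 1)) k
        = sol ε E f g x k + ε i • f k i (fun l => sol ε E f g x l) from
    fun x => H _ x rfl
  intro n
  induction n using Nat.strong_induction_on with
  | _ n IH =>
  intro x hx k i hik
  set x' := Function.update x i (x i + 1) with hx'
  have hne : ((E k).filter (fun j => x' j ≠ 0)).Nonempty :=
    ⟨i, by simp [hx', hik]⟩
  rw [sol_pos ε E f g hne]
  set m := ((E k).filter (fun j => x' j ≠ 0)).min' hne with hm
  have hmmem := Finset.min'_mem _ hne
  rw [Finset.mem_filter] at hmmem
  obtain ⟨hmE, hmne⟩ := hmmem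
  rw [← hm] at hmE hmne
  clear_value m
  clear_value x'
  rcases eq_or_ne m i with rfl | hmi
  · have hux : Function.update x' m (x' m - 1) = x := by
      funext l
      rcases eq_or_ne l m with rfl | h
      · simp [hx']
      · simp [Function.update_of_ne h, hx', Function.update_of_ne h]
    rw [hux]
  · -- m ≠ i
    have hxm : x m ≠ 0 := by
      have h1 : x' m = x m := by rw [hx']; exact Function.update_of_ne hmi _ _
      rwa [h1] at hmne
    set y := Function.update x m (x m - 1) with hy
    have hsy : ∑ j, y j < n := hx ▸ sum_update_sub_lt x m hxm
    have IHy := IH _ hsy y rfl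
    have hyx : Function.update y m (y m + 1) = x := by
      funext l
      rcases eq_or_ne l m with rfl | h
      · rw [Function.update_self, hy, Function.update_self]
        omega
      · rw [Function.update_of_ne h, hy, Function.update_of_ne h]
    have hyx' : Function.update x' m (x' m - 1) = Function.update y i (y i + 1) := by
      funext l
      rcases eq_or_ne l m with rfl | h
      · rw [Function.update_self, Function.update_of_ne hmi, hx',
          Function.update_of_ne hmi, hy, Function.update_self]
      · rcases eq_or_ne l i with rfl | h2
        · rw [Function.update_of_ne h, hx', Function.update_self,
            Function.update_self, hy, Function.update_of_ne h]
        · rw [Function.update_of_ne h, Function.update_of_ne h2, hx',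
            Function.update_of_ne h2, hy, Function.update_of_ne h]
    rw [hyx']
    have himE : i ∈ E k \ {m} := Finset.mem_sdiff.mpr ⟨hik, by simp [hmi.symm]⟩
    have hmiE : m ∈ E k \ {i} := Finset.mem_sdiff.mpr ⟨hmE, by simp [hmi]⟩
    have A1 : sol ε E f g (Function.update y i (y i + 1)) k
        = sol ε E f g y k + ε i • f k i (fun l => sol ε E f g y l) := IHy k i hik
    have A2 : f k m (fun l => sol ε E f g (Function.update y i (y i + 1)) l)
        = f k m (fun l => sol ε E f g y l + ε i • f l i (fun l' => sol ε E f g y l')) :=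
      hdep k m hmE _ _ (fun l hl => IHy l i (hl himE))
    have A3 : sol ε E f g x k
        = sol ε E f g y k + ε m • f k m (fun l => sol ε E f g y l) := by
      rw [← hyx]; exact IHy k m hmE
    have A4 : f k i (fun l => sol ε E f g x l)
        = f k i (fun l => sol ε E f g y l + ε m • f l m (fun l' => sol ε E f g y l')) :=
      hdep k i hik _ _ (fun l hl => by rw [← hyx]; exact IHy l m (hl hmiE))
    have key := hcomp k i hik m hmE (fun l => sol ε E f g y l)
    rw [A1, A2, A3, A4, add_assoc, add_assoc, key]
end step

/-- Existence and uniqueness of the solution of the Goursat problem for a compatible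
discrete d-dimensional hyperbolic system.  Lattice points are `x : Fin d → ℕ` (the point
`(x i · ε i)ᵢ`) with `x i ≤ Nm i`; the variable `a k` evolves in the directions `E k`
according to `a k (x + eᵢ) = a k x + ε i • f k i (a · x)` for `i ∈ E k`, and the Goursat
data `g k` are prescribed on the sublattice `𝒢_k = {x : x i = 0 for i ∈ E k}`. -/
theorem stmt18 (d N : ℕ) (X : Fin N → Type*)
    [∀ k, AddCommGroup (X k)] [∀ k, Module ℝ (X k)]
    (ε : Fin d → ℝ) (hε : ∀ i, 0 < ε i) (Nm : Fin d → ℕ)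
    (E : Fin N → Finset (Fin d)) (hE : ∀ k, (E k).Nonempty)
    (f : (k : Fin N) → Fin d → ((l : Fin N) → X l) → X k)
    -- (1): `f k i` depends only on those `a_ℓ` with `E k \ {i} ⊆ E ℓ`
    (hdep : ∀ k : Fin N, ∀ i ∈ E k, ∀ v w : (l : Fin N) → X l,
      (∀ l : Fin N, E k \ {i} ⊆ E l → v l = w l) → f k i v = f k i w)
    -- (2): the compatibility condition `δ_j δ_i a_k = δ_i δ_j a_k`
    (hcomp : ∀ k : Fin N, ∀ i ∈ E k, ∀ j ∈ E k, ∀ v : (l : Fin N) → X l,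
      ε i • f k i v + ε j • f k j (fun l => v l + ε i • f l i v) =
        ε j • f k j v + ε i • f k i (fun l => v l + ε j • f l j v))
    (g : (k : Fin N) → (Fin d → ℕ) → X k) :
    ∃ a : (k : Fin N) → (Fin d → ℕ) → X k,
      ((∀ k : Fin N, ∀ i ∈ E k, ∀ x : Fin d → ℕ, (∀ l, x l ≤ Nm l) → x i + 1 ≤ Nm i →
          a k (Function.update x i (x i + 1)) = a k x + ε i • f k i (fun l => a l x)) ∧
       (∀ k : Fin N, ∀ x : Fin d → ℕ, (∀ l, x l ≤ Nm l) → (∀ i ∈ E k, x i = 0) →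
          a k x = g k x)) ∧
      ∀ a' : (k : Fin N) → (Fin d → ℕ) → X k,
        ((∀ k : Fin N, ∀ i ∈ E k, ∀ x : Fin d → ℕ, (∀ l, x l ≤ Nm l) → x i + 1 ≤ Nm i →
            a' k (Function.update x i (x i + 1)) = a' k x + ε i • f k i (fun l => a' l x)) ∧
         (∀ k : Fin N, ∀ x : Fin d → ℕ, (∀ l, x l ≤ Nm l) → (∀ i ∈ E k, x i = 0) →
            a' k x = g k x)) →
        ∀ k : Fin N, ∀ x : Fin d → ℕ, (∀ l, x l ≤ Nm l) → a' k x = a k x := by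
  refine ⟨fun k x => sol ε E f g x k, ⟨?_, ?_⟩, ?_⟩
  · intro k i hik x _ _
    exact sol_step hdep hcomp x k i hik
  · intro k x _ hz
    exact sol_zero ε E f g hz
  · rintro a' ⟨h1, h2⟩
    suffices H : ∀ n, ∀ x : Fin d → ℕ, ∑ j, x j = n → (∀ l, x l ≤ Nm l) →
        ∀ k : Fin N, a' k x = sol ε E f g x k from
      fun k x hx => H _ x rfl hx k
    intro n
    induction n using Nat.strong_induction_on with
    | _ n IH =>
    intro x hxn hbox k
    by_cases hz : ∀ i ∈ E k, x i = 0
    · rw [h2 k x hbox hz, sol_zero ε E f g hz]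
    · push_neg at hz
      obtain ⟨i, hiE, hi⟩ := hz
      set y := Function.update x i (x i - 1) with hy
      have hxy : Function.update y i (y i + 1) = x := by
        funext l
        rcases eq_or_ne l i with rfl | h
        · rw [Function.update_self, hy, Function.update_self]
          omega
        · rw [Function.update_of_ne h, hy, Function.update_of_ne h]
      have hybox : ∀ l, y l ≤ Nm l := by
        intro l
        rcases eq_or_ne l i with rfl | h
        · rw [hy, Function.update_self]
          have := hbox l
          omega
        · rw [hy, Function.update_of_ne h]
          exact hbox l
      have hyi : y i + 1 ≤ Nm i := by
        rw [hy, Function.update_self]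
        have := hbox i
        omega
      have hsy : ∑ j, y j < n := hxn ▸ sum_update_sub_lt x i hi
      have IHy := IH _ hsy y rfl hybox
      have hfa : (fun l => a' l y) = fun l => sol ε E f g y l := funext fun l => IHy l
      calc a' k x = a' k (Function.update y i (y i + 1)) := by rw [hxy]
        _ = a' k y + ε i • f k i (fun l => a' l y) := h1 k i hiE y hybox hyi
        _ = sol ε E f g y k + ε i • f k i (fun l => sol ε E f g y l) := by
            rw [IHy k, hfa]
        _ = sol ε E f g (Function.update y i (y i + 1)) k :=
            (sol_step hdep hcomp y k i hiE).symm
        _ = sol ε E f g x k := by rw [hxy]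
end
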